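/- arXiv:2310.20538 — 5 statements merged into one kernel-verified Lean document; each statement's English description precedes it below -/
import Mathlib

section
/- At every x ∈ ℝ⁴ with x₃ > 0, the Christoffel symbols Γᵏᵢⱼ of the Siklos metric satisfy Γᵏᵢⱼ = Γᵏⱼᵢ, and the only nonzero ones (up to this symmetry of the lower indices) are: Γ³₁₂ = 1/x₃, Γ¹₁₃ = −1/x₃, Γ¹₂₂ = ½H'₂, Γ³₂₂ = (2H − x₃H'₃)/(2x₃), Γ⁴₂₂ = −½H'₄, Γ¹₂₃ = ½H'₃, Γ²₂₃ = −1/x₃, Γ¹₂₄ = ½H'₄, Γ³₃₃ = −1/x₃, Γ⁴₃₄ = −1/x₃ and Γ³₄₄ = 1/x₃, where H and its derivatives are evaluated at (x₂,x₃,x₄). -/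
open scoped BigOperators

/-- Partial derivative of `f : ℝⁿ → ℝ` in the `i`-th coordinate direction. -/
noncomputable def pd {n : ℕ} (i : Fin n) (f : (Fin n → ℝ) → ℝ) (x : Fin n → ℝ) : ℝ :=
  deriv (fun t => f (Function.update x i t)) (x i)

/-- Christoffel symbols `Γᵏᵢⱼ` of a metric field `g`. -/
noncomputable def christoffel {n : ℕ} (g : (Fin n → ℝ) → Matrix (Fin n) (Fin n) ℝ)
    (x : Fin n → ℝ) (k i j : Fin n) : ℝ :=
  (1 / 2) * ∑ l, (g x)⁻¹ k l *
    (pd i (fun y => g y l j) x + pd j (fun y => g y l i) x - pd l (fun y => g y i j) x)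

/-- `curv g x i j k l` is the `l`-th component of `R(∂ᵢ,∂ⱼ)∂ₖ` at `x`
(convention `R(X,Y) = [∇_X,∇_Y] − ∇_{[X,Y]}`). -/
noncomputable def curv {n : ℕ} (g : (Fin n → ℝ) → Matrix (Fin n) (Fin n) ℝ)
    (x : Fin n → ℝ) (i j k l : Fin n) : ℝ :=
  pd i (fun y => christoffel g y l j k) x - pd j (fun y => christoffel g y l i k) x
    + ∑ m, (christoffel g x l i m * christoffel g x m j k
        - christoffel g x l j m * christoffel g x m i k)

/-- The Siklos metric with parameter `β` and defining function `H = H(x₂,x₃,x₄)`;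
indices `0,1,2,3` correspond to the coordinates `x₁,x₂,x₃,x₄`. -/
noncomputable def siklos (β : ℝ) (H : ℝ → ℝ → ℝ → ℝ) (x : Fin 4 → ℝ) :
    Matrix (Fin 4) (Fin 4) ℝ :=
  Matrix.of fun i j =>
    if (i = 0 ∧ j = 1) ∨ (i = 1 ∧ j = 0) ∨ (i = 2 ∧ j = 2) ∨ (i = 3 ∧ j = 3) then
      β ^ 2 / x 2 ^ 2
    else if i = 1 ∧ j = 1 then β ^ 2 / x 2 ^ 2 * H (x 1) (x 2) (x 3)
    else 0

/-- `H'₂`. -/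
noncomputable def H2 (H : ℝ → ℝ → ℝ → ℝ) (a b c : ℝ) : ℝ := deriv (fun t => H t b c) a
/-- `H'₃`. -/
noncomputable def H3 (H : ℝ → ℝ → ℝ → ℝ) (a b c : ℝ) : ℝ := deriv (fun t => H a t c) b
/-- `H'₄`. -/
noncomputable def H4 (H : ℝ → ℝ → ℝ → ℝ) (a b c : ℝ) : ℝ := deriv (fun t => H a b t) c
/-- `H''₂₃`. -/
noncomputable def H23 (H : ℝ → ℝ → ℝ → ℝ) (a b c : ℝ) : ℝ := deriv (fun t => H3 H t b c) a
/-- `H''₃₃`. -/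
noncomputable def H33 (H : ℝ → ℝ → ℝ → ℝ) (a b c : ℝ) : ℝ := deriv (fun t => H3 H a t c) b
/-- `H''₃₄`. -/
noncomputable def H34 (H : ℝ → ℝ → ℝ → ℝ) (a b c : ℝ) : ℝ := deriv (fun t => H4 H a t c) b
/-- `H''₄₄`. -/
noncomputable def H44 (H : ℝ → ℝ → ℝ → ℝ) (a b c : ℝ) : ℝ := deriv (fun t => H4 H a b t) c

/-- Ricci tensor `Ricⱼₖ = Σᵢ (R(∂ᵢ,∂ⱼ)∂ₖ)ⁱ` of the Siklos metric. -/
noncomputable def ricci (β : ℝ) (H : ℝ → ℝ → ℝ → ℝ) (x : Fin 4 → ℝ) (j k : Fin 4) : ℝ :=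
  ∑ i, curv (siklos β H) x i j k i

/-- Scalar curvature of the Siklos metric. -/
noncomputable def scal (β : ℝ) (H : ℝ → ℝ → ℝ → ℝ) (x : Fin 4 → ℝ) : ℝ :=
  ∑ j, ∑ k, (siklos β H x)⁻¹ j k * ricci β H x j k

/-- `g(X,Y) = Σᵢⱼ gᵢⱼ Xⁱ Yʲ`. -/
noncomputable def gApply (M : Matrix (Fin 4) (Fin 4) ℝ) (X Y : Fin 4 → ℝ) : ℝ :=
  ∑ i, ∑ j, M i j * X i * Y j

/-- Curvature applied to arbitrary vectors: `R(X,Y)Z = Σᵢⱼₖ XⁱYʲZᵏ R(∂ᵢ,∂ⱼ)∂ₖ`. -/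
noncomputable def Rmulti (β : ℝ) (H : ℝ → ℝ → ℝ → ℝ) (x : Fin 4 → ℝ)
    (X Y Z : Fin 4 → ℝ) (l : Fin 4) : ℝ :=
  ∑ i, ∑ j, ∑ k, X i * Y j * Z k * curv (siklos β H) x i j k l

/-- `Rₐᵦ𝒸𝒹 = g(R(∂ₐ,∂ᵦ)∂𝒹, ∂𝒸)`. -/
noncomputable def Rlow (β : ℝ) (H : ℝ → ℝ → ℝ → ℝ) (x : Fin 4 → ℝ) (a b c d : Fin 4) : ℝ :=
  ∑ l, siklos β H x l c * curv (siklos β H) x a b d l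

/-- The Weyl tensor (in dimension 4) of the Siklos metric. -/
noncomputable def weyl (β : ℝ) (H : ℝ → ℝ → ℝ → ℝ) (x : Fin 4 → ℝ) (a b c d : Fin 4) : ℝ :=
  Rlow β H x a b c d
    - (1 / 2) * (siklos β H x a c * ricci β H x b d - siklos β H x a d * ricci β H x b c
        + siklos β H x b d * ricci β H x a c - siklos β H x b c * ricci β H x a d)
    + scal β H x / 6 *
        (siklos β H x a c * siklos β H x b d - siklos β H x a d * siklos β H x b c)

/-- Coordinate tangent vector `F_{uᵢ}` of an immersion `F : ℝ³ → ℝ⁴`. -/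
noncomputable def Fu (F : (Fin 3 → ℝ) → Fin 4 → ℝ) (i : Fin 3) (u : Fin 3 → ℝ) :
    Fin 4 → ℝ := fun k => pd i (fun v => F v k) u

/-- Ambient covariant derivative `DᵢF_{uⱼ}` along `F`, for the Siklos metric. -/
noncomputable def ambD (β : ℝ) (H : ℝ → ℝ → ℝ → ℝ) (F : (Fin 3 → ℝ) → Fin 4 → ℝ)
    (i j : Fin 3) (u : Fin 3 → ℝ) : Fin 4 → ℝ :=
  fun k => pd i (fun v => Fu F j v k) u
    + ∑ l, ∑ m, christoffel (siklos β H) (F u) k l m * Fu F i u l * Fu F j u m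

/-- Second fundamental form `hᵢⱼ = g(DᵢF_{uⱼ}, ξ)` of `F` with unit normal `ξ`. -/
noncomputable def sff (β : ℝ) (H : ℝ → ℝ → ℝ → ℝ) (F ξ : (Fin 3 → ℝ) → Fin 4 → ℝ)
    (i j : Fin 3) (u : Fin 3 → ℝ) : ℝ :=
  gApply (siklos β H (F u)) (ambD β H F i j u) (ξ u)

/-- Induced metric `ĝᵢⱼ = g(F_{uᵢ}, F_{uⱼ})` of the hypersurface. -/
noncomputable def inducedMetric (β : ℝ) (H : ℝ → ℝ → ℝ → ℝ) (F : (Fin 3 → ℝ) → Fin 4 → ℝ)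
    (u : Fin 3 → ℝ) : Matrix (Fin 3) (Fin 3) ℝ :=
  Matrix.of fun i j => gApply (siklos β H (F u)) (Fu F i u) (Fu F j u)

/-- Covariant derivative of the second fundamental form,
`(∇h)ₖᵢⱼ = ∂ₖhᵢⱼ − Σₗ Γ̂ˡₖᵢ hₗⱼ − Σₗ Γ̂ˡₖⱼ hᵢₗ`. -/
noncomputable def nablah (β : ℝ) (H : ℝ → ℝ → ℝ → ℝ) (F ξ : (Fin 3 → ℝ) → Fin 4 → ℝ)
    (k i j : Fin 3) (u : Fin 3 → ℝ) : ℝ :=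
  pd k (fun v => sff β H F ξ i j v) u
    - ∑ l, christoffel (inducedMetric β H F) u l k i * sff β H F ξ l j u
    - ∑ l, christoffel (inducedMetric β H F) u l k j * sff β H F ξ i l u

/-- Mean curvature `(1/3) Σᵢⱼ ĝⁱʲ hᵢⱼ` of the hypersurface. -/
noncomputable def meanCurv (β : ℝ) (H : ℝ → ℝ → ℝ → ℝ) (F ξ : (Fin 3 → ℝ) → Fin 4 → ℝ)
    (u : Fin 3 → ℝ) : ℝ :=
  (1 / 3) * ∑ i, ∑ j, (inducedMetric β H F u)⁻¹ i j * sff β H F ξ i j u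


section Aux

lemma pd_siklos (β : ℝ) (H : ℝ → ℝ → ℝ → ℝ)
    (hH : ContDiff ℝ (⊤ : ℕ∞) fun p : ℝ × ℝ × ℝ => H p.1 p.2.1 p.2.2)
    (x : Fin 4 → ℝ) (hx : 0 < x 2) (i l j : Fin 4) :
    pd i (fun y => siklos β H y l j) x =
      if (l = 0 ∧ j = 1) ∨ (l = 1 ∧ j = 0) ∨ (l = 2 ∧ j = 2) ∨ (l = 3 ∧ j = 3) then
        (if i = 2 then -2 * β ^ 2 / x 2 ^ 3 else 0)
      else if l = 1 ∧ j = 1 then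
        (if i = 1 then β ^ 2 / x 2 ^ 2 * H2 H (x 1) (x 2) (x 3)
         else if i = 2 then -2 * β ^ 2 / x 2 ^ 3 * H (x 1) (x 2) (x 3)
             + β ^ 2 / x 2 ^ 2 * H3 H (x 1) (x 2) (x 3)
         else if i = 3 then β ^ 2 / x 2 ^ 2 * H4 H (x 1) (x 2) (x 3)
         else 0)
      else 0 := by
  have hx0 : x 2 ≠ 0 := ne_of_gt hx
  have d1 : ∀ b c, Differentiable ℝ (fun t => H t b c) := fun b c =>
    (hH.differentiable (by simp)).comp (differentiable_id.prodMk (differentiable_const (b, c)))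
  have d2 : ∀ a c, Differentiable ℝ (fun t => H a t c) := fun a c =>
    (hH.differentiable (by simp)).comp
      ((differentiable_const a).prodMk (differentiable_id.prodMk (differentiable_const c)))
  have d3 : ∀ a b, Differentiable ℝ (fun t => H a b t) := fun a b =>
    (hH.differentiable (by simp)).comp
      ((differentiable_const a).prodMk ((differentiable_const b).prodMk differentiable_id))
  have hsq : HasDerivAt (fun t : ℝ => β ^ 2 / t ^ 2) (-2 * β ^ 2 / x 2 ^ 3) (x 2) := by
    have heq : (fun t : ℝ => β ^ 2 / t ^ 2) = fun t => β ^ 2 * (t ^ 2)⁻¹ := by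
      funext t; rw [div_eq_mul_inv]
    rw [heq]
    have h := ((hasDerivAt_pow 2 (x 2)).inv (pow_ne_zero 2 hx0)).const_mul (β ^ 2)
    refine h.congr_deriv ?_
    field_simp; ring
  have hprod : HasDerivAt (fun t => β ^ 2 / t ^ 2 * H (x 1) t (x 3))
      (-2 * β ^ 2 / x 2 ^ 3 * H (x 1) (x 2) (x 3)
        + β ^ 2 / x 2 ^ 2 * H3 H (x 1) (x 2) (x 3)) (x 2) :=
    hsq.mul ((d2 (x 1) (x 3)) (x 2)).hasDerivAt
  fin_cases l <;> fin_cases j <;> fin_cases i <;>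
    simp only [siklos, pd, Matrix.of_apply, Fin.isValue] <;>
    simp [Function.update_apply, deriv_const']
  all_goals first
    | (rw [hsq.deriv]; ring)
    | (exact Or.inl rfl)
    | (rw [hprod.deriv]; ring)

lemma siklos_inv (β : ℝ) (hβ : 0 < β) (H : ℝ → ℝ → ℝ → ℝ) (x : Fin 4 → ℝ) (hx : 0 < x 2) :
    (siklos β H x)⁻¹ = Matrix.of fun i j =>
      if (i = 0 ∧ j = 1) ∨ (i = 1 ∧ j = 0) ∨ (i = 2 ∧ j = 2) ∨ (i = 3 ∧ j = 3) then
        x 2 ^ 2 / β ^ 2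
      else if i = 0 ∧ j = 0 then -(x 2 ^ 2 / β ^ 2 * H (x 1) (x 2) (x 3))
      else 0 := by
  have hb0 : β ≠ 0 := ne_of_gt hβ
  have hx0 : x 2 ≠ 0 := ne_of_gt hx
  apply Matrix.inv_eq_right_inv
  ext i j
  fin_cases i <;> fin_cases j <;>
    simp [Matrix.mul_apply, Fin.sum_univ_four, siklos, Matrix.one_apply] <;>
    field_simp <;> ring

end Aux

set_option maxHeartbeats 1600000 in
/-- the Christoffel symbols of the Siklos metric. -/
theorem stmt_1 (β : ℝ) (hβ : 0 < β) (H : ℝ → ℝ → ℝ → ℝ)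
    (hH : ContDiff ℝ (⊤ : ℕ∞) fun p : ℝ × ℝ × ℝ => H p.1 p.2.1 p.2.2)
    (x : Fin 4 → ℝ) (hx : 0 < x 2) :
    (∀ k i j : Fin 4, christoffel (siklos β H) x k i j = christoffel (siklos β H) x k j i) ∧
    (∀ k i j : Fin 4, christoffel (siklos β H) x k i j =
      if k = 2 ∧ ((i = 0 ∧ j = 1) ∨ (i = 1 ∧ j = 0)) then 1 / x 2
      else if k = 0 ∧ ((i = 0 ∧ j = 2) ∨ (i = 2 ∧ j = 0)) then -(1 / x 2)
      else if k = 0 ∧ i = 1 ∧ j = 1 then H2 H (x 1) (x 2) (x 3) / 2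
      else if k = 2 ∧ i = 1 ∧ j = 1 then
        (2 * H (x 1) (x 2) (x 3) - x 2 * H3 H (x 1) (x 2) (x 3)) / (2 * x 2)
      else if k = 3 ∧ i = 1 ∧ j = 1 then -(H4 H (x 1) (x 2) (x 3) / 2)
      else if k = 0 ∧ ((i = 1 ∧ j = 2) ∨ (i = 2 ∧ j = 1)) then H3 H (x 1) (x 2) (x 3) / 2
      else if k = 1 ∧ ((i = 1 ∧ j = 2) ∨ (i = 2 ∧ j = 1)) then -(1 / x 2)
      else if k = 0 ∧ ((i = 1 ∧ j = 3) ∨ (i = 3 ∧ j = 1)) then H4 H (x 1) (x 2) (x 3) / 2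
      else if k = 2 ∧ i = 2 ∧ j = 2 then -(1 / x 2)
      else if k = 3 ∧ ((i = 2 ∧ j = 3) ∨ (i = 3 ∧ j = 2)) then -(1 / x 2)
      else if k = 2 ∧ i = 3 ∧ j = 3 then 1 / x 2
      else 0) := by
  have hb0 : β ≠ 0 := ne_of_gt hβ
  have hx0 : x 2 ≠ 0 := ne_of_gt hx
  have key : ∀ k i j : Fin 4, christoffel (siklos β H) x k i j =
      if k = 2 ∧ ((i = 0 ∧ j = 1) ∨ (i = 1 ∧ j = 0)) then 1 / x 2
      else if k = 0 ∧ ((i = 0 ∧ j = 2) ∨ (i = 2 ∧ j = 0)) then -(1 / x 2)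
      else if k = 0 ∧ i = 1 ∧ j = 1 then H2 H (x 1) (x 2) (x 3) / 2
      else if k = 2 ∧ i = 1 ∧ j = 1 then
        (2 * H (x 1) (x 2) (x 3) - x 2 * H3 H (x 1) (x 2) (x 3)) / (2 * x 2)
      else if k = 3 ∧ i = 1 ∧ j = 1 then -(H4 H (x 1) (x 2) (x 3) / 2)
      else if k = 0 ∧ ((i = 1 ∧ j = 2) ∨ (i = 2 ∧ j = 1)) then H3 H (x 1) (x 2) (x 3) / 2
      else if k = 1 ∧ ((i = 1 ∧ j = 2) ∨ (i = 2 ∧ j = 1)) then -(1 / x 2)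
      else if k = 0 ∧ ((i = 1 ∧ j = 3) ∨ (i = 3 ∧ j = 1)) then H4 H (x 1) (x 2) (x 3) / 2
      else if k = 2 ∧ i = 2 ∧ j = 2 then -(1 / x 2)
      else if k = 3 ∧ ((i = 2 ∧ j = 3) ∨ (i = 3 ∧ j = 2)) then -(1 / x 2)
      else if k = 2 ∧ i = 3 ∧ j = 3 then 1 / x 2
      else 0 := by
    intro k i j
    fin_cases k <;> fin_cases i <;> fin_cases j <;>
      simp only [christoffel, Fin.sum_univ_four, siklos_inv β hβ H x hx,
        pd_siklos β H hH x hx, Matrix.of_apply] <;>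
      simp <;>
      (first | ring1 | (field_simp <;> ring1))
  refine ⟨fun k i j => ?_, key⟩
  rw [key k i j, key k j i]
  fin_cases i <;> fin_cases j <;> simp
end

section
/- The Siklos metric is Einstein, i.e. there exists a constant λ ∈ ℝ such that Ricᵢⱼ(x) = λ·gᵢⱼ(x) for all i,j and all x with x₃ > 0, if and only if H satisfies (2/x₃)H'₃ − H''₃₃ − H''₄₄ = 0 at every (x₂,x₃,x₄) with x₃ > 0; and in that case necessarily λ = −3/β². -/
open scoped BigOperators

-- auxiliary development
namespace SiklosProof

def unc (H : ℝ → ℝ → ℝ → ℝ) : ℝ × ℝ × ℝ → ℝ := fun p => H p.1 p.2.1 p.2.2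

variable {H : ℝ → ℝ → ℝ → ℝ}

theorem line1_hasDerivAt (a b c : ℝ) :
    HasDerivAt (fun t : ℝ => ((t, b, c) : ℝ × ℝ × ℝ)) ((1:ℝ), (0:ℝ), (0:ℝ)) a :=
  (hasDerivAt_id a).prodMk ((hasDerivAt_const a b).prodMk (hasDerivAt_const a c))

theorem line2_hasDerivAt (a b c : ℝ) :
    HasDerivAt (fun t : ℝ => ((a, t, c) : ℝ × ℝ × ℝ)) ((0:ℝ), (1:ℝ), (0:ℝ)) b :=
  (hasDerivAt_const b a).prodMk ((hasDerivAt_id b).prodMk (hasDerivAt_const b c))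

theorem line3_hasDerivAt (a b c : ℝ) :
    HasDerivAt (fun t : ℝ => ((a, b, t) : ℝ × ℝ × ℝ)) ((0:ℝ), (0:ℝ), (1:ℝ)) c :=
  (hasDerivAt_const c a).prodMk ((hasDerivAt_const c b).prodMk (hasDerivAt_id c))

theorem slice1_hasDerivAt {φ : ℝ × ℝ × ℝ → ℝ} (hφ : ContDiff ℝ (⊤ : ℕ∞) φ) (a b c : ℝ) :
    HasDerivAt (fun t => φ (t, b, c)) (fderiv ℝ φ (a, b, c) (1, 0, 0)) a :=
  (hφ.differentiable (by simp) (a, b, c)).hasFDerivAt.comp_hasDerivAt a (line1_hasDerivAt a b c)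

theorem slice2_hasDerivAt {φ : ℝ × ℝ × ℝ → ℝ} (hφ : ContDiff ℝ (⊤ : ℕ∞) φ) (a b c : ℝ) :
    HasDerivAt (fun t => φ (a, t, c)) (fderiv ℝ φ (a, b, c) (0, 1, 0)) b :=
  (hφ.differentiable (by simp) (a, b, c)).hasFDerivAt.comp_hasDerivAt b (line2_hasDerivAt a b c)

theorem slice3_hasDerivAt {φ : ℝ × ℝ × ℝ → ℝ} (hφ : ContDiff ℝ (⊤ : ℕ∞) φ) (a b c : ℝ) :
    HasDerivAt (fun t => φ (a, b, t)) (fderiv ℝ φ (a, b, c) (0, 0, 1)) c :=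
  (hφ.differentiable (by simp) (a, b, c)).hasFDerivAt.comp_hasDerivAt c (line3_hasDerivAt a b c)

theorem contDiff_fderiv_apply {φ : ℝ × ℝ × ℝ → ℝ} (hφ : ContDiff ℝ (⊤ : ℕ∞) φ) (v : ℝ × ℝ × ℝ) :
    ContDiff ℝ (⊤ : ℕ∞) (fun p => fderiv ℝ φ p v) :=
  (hφ.fderiv_right (by simp)).clm_apply contDiff_const

theorem H3_eq (hH : ContDiff ℝ (⊤ : ℕ∞) (unc H)) (a b c : ℝ) :
    H3 H a b c = fderiv ℝ (unc H) (a, b, c) (0, 1, 0) :=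
  (slice2_hasDerivAt hH a b c).deriv

theorem H4_eq (hH : ContDiff ℝ (⊤ : ℕ∞) (unc H)) (a b c : ℝ) :
    H4 H a b c = fderiv ℝ (unc H) (a, b, c) (0, 0, 1) :=
  (slice3_hasDerivAt hH a b c).deriv

theorem H2_eq (hH : ContDiff ℝ (⊤ : ℕ∞) (unc H)) (a b c : ℝ) :
    H2 H a b c = fderiv ℝ (unc H) (a, b, c) (1, 0, 0) :=
  (slice1_hasDerivAt hH a b c).deriv

theorem hasDerivAt_H1slice (hH : ContDiff ℝ (⊤ : ℕ∞) (unc H)) (a b c : ℝ) :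
    HasDerivAt (fun t => H t b c) (H2 H a b c) a :=
  (H2_eq hH a b c) ▸ slice1_hasDerivAt hH a b c

theorem hasDerivAt_H2slice (hH : ContDiff ℝ (⊤ : ℕ∞) (unc H)) (a b c : ℝ) :
    HasDerivAt (fun t => H a t c) (H3 H a b c) b :=
  (H3_eq hH a b c) ▸ slice2_hasDerivAt hH a b c

theorem hasDerivAt_H3slice (hH : ContDiff ℝ (⊤ : ℕ∞) (unc H)) (a b c : ℝ) :
    HasDerivAt (fun t => H a b t) (H4 H a b c) c :=
  (H4_eq hH a b c) ▸ slice3_hasDerivAt hH a b c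

theorem hasDerivAt_H33 (hH : ContDiff ℝ (⊤ : ℕ∞) (unc H)) (a b c : ℝ) :
    HasDerivAt (fun t => H3 H a t c) (H33 H a b c) b := by
  have h1 : (fun t => H3 H a t c) = fun t => (fun p => fderiv ℝ (unc H) p (0,1,0)) (a, t, c) := by
    funext t; exact H3_eq hH a t c
  have h2 := slice2_hasDerivAt (contDiff_fderiv_apply hH ((0:ℝ),(1:ℝ),(0:ℝ))) a b c
  rw [← h1] at h2
  have : H33 H a b c = fderiv ℝ (fun p => fderiv ℝ (unc H) p (0,1,0)) (a,b,c) (0,1,0) := by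
    rw [H33]; exact h2.deriv
  rw [this]; exact h2

theorem hasDerivAt_H44 (hH : ContDiff ℝ (⊤ : ℕ∞) (unc H)) (a b c : ℝ) :
    HasDerivAt (fun t => H4 H a b t) (H44 H a b c) c := by
  have h1 : (fun t => H4 H a b t) = fun t => (fun p => fderiv ℝ (unc H) p (0,0,1)) (a, b, t) := by
    funext t; exact H4_eq hH a b t
  have h2 := slice3_hasDerivAt (contDiff_fderiv_apply hH ((0:ℝ),(0:ℝ),(1:ℝ))) a b c
  rw [← h1] at h2
  have : H44 H a b c = fderiv ℝ (fun p => fderiv ℝ (unc H) p (0,0,1)) (a,b,c) (0,0,1) := by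
    rw [H44]; exact h2.deriv
  rw [this]; exact h2

theorem hasDerivAt_a (β : ℝ) {t0 : ℝ} (h : t0 ≠ 0) :
    HasDerivAt (fun t : ℝ => β ^ 2 / t ^ 2) (-(2 * β ^ 2 / t0 ^ 3)) t0 := by
  have h2 : t0 ^ 2 ≠ 0 := pow_ne_zero _ h
  have := (hasDerivAt_const t0 (β ^ 2)).div (hasDerivAt_pow 2 t0) h2
  refine this.congr_deriv ?_
  field_simp
  ring

theorem hasDerivAt_inv' {t0 : ℝ} (h : t0 ≠ 0) :
    HasDerivAt (fun t : ℝ => 1 / t) (-(1 / t0 ^ 2)) t0 := by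
  have := hasDerivAt_inv h
  simp only [one_div]
  convert this using 1

/-- table of partial derivatives of the metric entries -/
noncomputable def dg (β : ℝ) (H : ℝ → ℝ → ℝ → ℝ) (x : Fin 4 → ℝ) (i l j : Fin 4) : ℝ :=
  if (l = 0 ∧ j = 1) ∨ (l = 1 ∧ j = 0) ∨ (l = 2 ∧ j = 2) ∨ (l = 3 ∧ j = 3) then
    (if i = 2 then -(2 * β ^ 2 / x 2 ^ 3) else 0)
  else if l = 1 ∧ j = 1 then
    (if i = 1 then β ^ 2 / x 2 ^ 2 * H2 H (x 1) (x 2) (x 3)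
     else if i = 2 then
       -(2 * β ^ 2 / x 2 ^ 3) * H (x 1) (x 2) (x 3) + β ^ 2 / x 2 ^ 2 * H3 H (x 1) (x 2) (x 3)
     else if i = 3 then β ^ 2 / x 2 ^ 2 * H4 H (x 1) (x 2) (x 3)
     else 0)
  else 0

theorem pd_siklos (β : ℝ) (hH : ContDiff ℝ (⊤ : ℕ∞) (unc H)) (x : Fin 4 → ℝ) (hx : x 2 ≠ 0)
    (i l j : Fin 4) : pd i (fun y => siklos β H y l j) x = dg β H x i l j := by
  fin_cases i <;> fin_cases l <;> fin_cases j <;>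
    (simp only [pd, siklos, dg, Matrix.of_apply, Function.update_apply]; simp;
     try first
       | rfl
       | exact (hasDerivAt_a β hx).deriv
       | exact ((hasDerivAt_H1slice hH (x 1) (x 2) (x 3)).const_mul (β ^ 2 / x 2 ^ 2)).deriv
       | exact ((hasDerivAt_H3slice hH (x 1) (x 2) (x 3)).const_mul (β ^ 2 / x 2 ^ 2)).deriv
       | exact ((hasDerivAt_a β hx).mul (hasDerivAt_H2slice hH (x 1) (x 2) (x 3))).deriv
       | exact Or.inl rfl
       | (refine HasDerivAt.deriv ?_;
          refine ((hasDerivAt_a β hx).mul (hasDerivAt_H2slice hH (x 1) (x 2) (x 3))).congr_deriv ?_;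
          ring))



noncomputable def Ninv (β : ℝ) (H : ℝ → ℝ → ℝ → ℝ) (x : Fin 4 → ℝ) :
    Matrix (Fin 4) (Fin 4) ℝ :=
  Matrix.of fun i j =>
    if (i = 0 ∧ j = 1) ∨ (i = 1 ∧ j = 0) ∨ (i = 2 ∧ j = 2) ∨ (i = 3 ∧ j = 3) then
      x 2 ^ 2 / β ^ 2
    else if i = 0 ∧ j = 0 then -(x 2 ^ 2 / β ^ 2 * H (x 1) (x 2) (x 3))
    else 0

theorem siklos_inv {β : ℝ} (hβ : β ≠ 0) (H : ℝ → ℝ → ℝ → ℝ) (x : Fin 4 → ℝ)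
    (hx : x 2 ≠ 0) : (siklos β H x)⁻¹ = Ninv β H x := by
  apply Matrix.inv_eq_right_inv
  ext i j
  fin_cases i <;> fin_cases j <;>
    simp [siklos, Ninv, Matrix.mul_apply, Fin.sum_univ_four, Matrix.one_apply] <;>
    (field_simp; try ring)

/-- explicit Christoffel symbols of the Siklos metric -/
noncomputable def Ge (H : ℝ → ℝ → ℝ → ℝ) (y : Fin 4 → ℝ) (k i j : Fin 4) : ℝ :=
  if k = 0 ∧ ((i = 0 ∧ j = 2) ∨ (i = 2 ∧ j = 0)) then -(1 / y 2)
  else if k = 0 ∧ i = 1 ∧ j = 1 then (1 / 2) * H2 H (y 1) (y 2) (y 3)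
  else if k = 0 ∧ ((i = 1 ∧ j = 2) ∨ (i = 2 ∧ j = 1)) then (1 / 2) * H3 H (y 1) (y 2) (y 3)
  else if k = 0 ∧ ((i = 1 ∧ j = 3) ∨ (i = 3 ∧ j = 1)) then (1 / 2) * H4 H (y 1) (y 2) (y 3)
  else if k = 1 ∧ ((i = 1 ∧ j = 2) ∨ (i = 2 ∧ j = 1)) then -(1 / y 2)
  else if k = 2 ∧ ((i = 0 ∧ j = 1) ∨ (i = 1 ∧ j = 0)) then 1 / y 2
  else if k = 2 ∧ i = 1 ∧ j = 1 then
    H (y 1) (y 2) (y 3) / y 2 - (1 / 2) * H3 H (y 1) (y 2) (y 3)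
  else if k = 2 ∧ i = 2 ∧ j = 2 then -(1 / y 2)
  else if k = 2 ∧ i = 3 ∧ j = 3 then 1 / y 2
  else if k = 3 ∧ i = 1 ∧ j = 1 then -((1 / 2) * H4 H (y 1) (y 2) (y 3))
  else if k = 3 ∧ ((i = 2 ∧ j = 3) ∨ (i = 3 ∧ j = 2)) then -(1 / y 2)
  else 0

set_option maxHeartbeats 2000000 in
theorem christoffel_eq {β : ℝ} (hβ : β ≠ 0) (hH : ContDiff ℝ (⊤ : ℕ∞) (unc H)) (x : Fin 4 → ℝ)
    (hx : x 2 ≠ 0) (k i j : Fin 4) :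
    christoffel (siklos β H) x k i j = Ge H x k i j := by
  rw [christoffel, siklos_inv hβ H x hx]
  simp only [Fin.sum_univ_four, pd_siklos β hH x hx]
  fin_cases k <;> fin_cases i <;> fin_cases j <;>
    (simp [Ninv, dg, Ge]; try field_simp; try ring)




theorem pd_congr {f g : (Fin 4 → ℝ) → ℝ} {x : Fin 4 → ℝ} (hx : x 2 ≠ 0) (i : Fin 4)
    (h : ∀ y : Fin 4 → ℝ, y 2 ≠ 0 → f y = g y) : pd i f x = pd i g x := by
  unfold pd
  apply Filter.EventuallyEq.deriv_eq
  by_cases hi : i = 2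
  · subst hi
    filter_upwards [eventually_ne_nhds hx] with t ht
    exact h _ (by simpa using ht)
  · filter_upwards with t
    refine h _ ?_
    rwa [Function.update_of_ne (Ne.symm hi)]

theorem pd_christoffel_congr {β : ℝ} (hβ : β ≠ 0) (hH : ContDiff ℝ (⊤ : ℕ∞) (unc H))
    (x : Fin 4 → ℝ) (hx : x 2 ≠ 0) (d l a b : Fin 4) :
    pd d (fun y => christoffel (siklos β H) y l a b) x = pd d (fun y => Ge H y l a b) x :=
  pd_congr hx d (fun y hy => christoffel_eq hβ hH y hy l a b)

theorem hasDerivAt_neg_inv {t0 : ℝ} (h : t0 ≠ 0) :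
    HasDerivAt (fun t : ℝ => -(1 / t)) (1 / t0 ^ 2) t0 := by
  have := (hasDerivAt_inv' h).neg
  refine this.congr_deriv ?_
  ring

/-- derivative table: `pd d (Γᵈₐᵦ)` -/
noncomputable def dGe1 (H : ℝ → ℝ → ℝ → ℝ) (x : Fin 4 → ℝ) (d a b : Fin 4) : ℝ :=
  if d = 2 then
    (if (a = 0 ∧ b = 1) ∨ (a = 1 ∧ b = 0) then -(1 / x 2 ^ 2)
     else if a = 1 ∧ b = 1 then
       -(1 / x 2 ^ 2) * H (x 1) (x 2) (x 3) + (1 / x 2) * H3 H (x 1) (x 2) (x 3)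
         - (1 / 2) * H33 H (x 1) (x 2) (x 3)
     else if a = 2 ∧ b = 2 then 1 / x 2 ^ 2
     else if a = 3 ∧ b = 3 then -(1 / x 2 ^ 2)
     else 0)
  else if d = 3 ∧ a = 1 ∧ b = 1 then -((1 / 2) * H44 H (x 1) (x 2) (x 3))
  else 0

/-- derivative table: `pd d (Γˡₗᵦ)` -/
noncomputable def dGe2 (x : Fin 4 → ℝ) (d l b : Fin 4) : ℝ :=
  if d = 2 ∧ b = 2 then 1 / x 2 ^ 2 else 0

theorem hasDerivAt_G211 (hH : ContDiff ℝ (⊤ : ℕ∞) (unc H)) {a c t0 : ℝ} (h : t0 ≠ 0) :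
    HasDerivAt (fun t => H a t c / t - 1 / 2 * H3 H a t c)
      (-(1 / t0 ^ 2) * H a t0 c + (1 / t0) * H3 H a t0 c - (1 / 2) * H33 H a t0 c) t0 := by
  have h1 := (hasDerivAt_H2slice hH a t0 c).div (hasDerivAt_id t0) h
  have h2 := (hasDerivAt_H33 hH a t0 c).const_mul (1 / 2 : ℝ)
  refine (h1.sub h2).congr_deriv ?_
  simp only [id]
  field_simp
  ring

theorem pd_Ge1 (hH : ContDiff ℝ (⊤ : ℕ∞) (unc H)) (x : Fin 4 → ℝ) (hx : x 2 ≠ 0) (d a b : Fin 4) :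
    pd d (fun y => Ge H y d a b) x = dGe1 H x d a b := by
  fin_cases d <;> fin_cases a <;> fin_cases b <;>
    (simp only [pd, Ge, dGe1, Function.update_apply, Fin.zero_eta, Fin.mk_one, Fin.reduceFinMk, Fin.reduceEq, and_false, false_and,
       and_true, true_and, or_false, false_or, or_true, true_or, and_self, reduceIte];
     first
       | exact deriv_const _ _
       | exact (hasDerivAt_neg_inv hx).deriv
       | exact (hasDerivAt_inv' hx).deriv
       | exact (hasDerivAt_G211 hH hx).deriv
       | exact (((hasDerivAt_H44 hH (x 1) (x 2) (x 3)).const_mul (1 / 2 : ℝ)).neg).deriv)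

theorem pd_Ge2 (x : Fin 4 → ℝ) (hx : x 2 ≠ 0) (d l b : Fin 4) :
    pd d (fun y => Ge H y l l b) x = dGe2 x d l b := by
  fin_cases d <;> fin_cases l <;> fin_cases b <;>
    (simp only [pd, Ge, dGe2, Function.update_apply, Fin.zero_eta, Fin.mk_one, Fin.reduceFinMk, Fin.reduceEq, and_false, false_and,
       and_true, true_and, or_false, false_or, or_true, true_or, and_self, reduceIte];
     first
       | exact deriv_const _ _
       | exact (hasDerivAt_neg_inv hx).deriv
       | exact (hasDerivAt_inv' hx).deriv)


noncomputable def Rc (H : ℝ → ℝ → ℝ → ℝ) (x : Fin 4 → ℝ) (j k : Fin 4) : ℝ :=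
  if (j = 0 ∧ k = 1) ∨ (j = 1 ∧ k = 0) ∨ (j = 2 ∧ k = 2) ∨ (j = 3 ∧ k = 3) then -(3 / x 2 ^ 2)
  else if j = 1 ∧ k = 1 then
    -(3 / x 2 ^ 2) * H (x 1) (x 2) (x 3) + (1 / x 2) * H3 H (x 1) (x 2) (x 3)
      - (1 / 2) * H33 H (x 1) (x 2) (x 3) - (1 / 2) * H44 H (x 1) (x 2) (x 3)
  else 0

set_option maxHeartbeats 4000000 in
theorem ricci_eq {β : ℝ} {H : ℝ → ℝ → ℝ → ℝ} (hβ : β ≠ 0) (hH : ContDiff ℝ (⊤ : ℕ∞) (unc H))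
    (x : Fin 4 → ℝ) (hx : x 2 ≠ 0) (j k : Fin 4) :
    ricci β H x j k = Rc H x j k := by
  have hpd := pd_christoffel_congr (H := H) hβ hH x hx
  have h1 := pd_Ge1 hH x hx
  have h2 := pd_Ge2 (H := H) x hx
  have hc := christoffel_eq hβ hH x hx
  fin_cases j <;> fin_cases k <;>
    (simp only [ricci, curv, Fin.sum_univ_four];
     simp only [hpd, h1, h2, hc];
     simp only [Ge, dGe1, dGe2, Rc, Fin.zero_eta, Fin.mk_one, Fin.reduceFinMk, Fin.reduceEq,
       and_false, false_and, and_true, true_and, or_false, false_or, or_true, true_or,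
       and_self, reduceIte];
     first
       | (field_simp; try ring)
       | ring
       | ring_nf
       | simp)

end SiklosProof


theorem stmt_3_aux {β : ℝ} {H : ℝ → ℝ → ℝ → ℝ} (hβ : β ≠ 0)
    (hH : ContDiff ℝ (⊤ : ℕ∞) (SiklosProof.unc H)) (lam : ℝ)
    (hl : ∀ x : Fin 4 → ℝ, 0 < x 2 → ∀ i j : Fin 4,
      ricci β H x i j = lam * siklos β H x i j) : lam = -3 / β ^ 2 := by
  have h0 : ((![0, 0, 1, 0] : Fin 4 → ℝ) 2) = 1 := by simp
  have h1 := hl ![0, 0, 1, 0] (by rw [h0]; norm_num) 0 1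
  rw [SiklosProof.ricci_eq hβ hH ![0, 0, 1, 0] (by rw [h0]; norm_num) 0 1] at h1
  simp only [SiklosProof.Rc, siklos, Matrix.of_apply, h0, Fin.reduceEq, and_false, false_and,
    and_true, true_and, or_false, false_or, or_true, true_or, and_self, reduceIte] at h1
  field_simp at h1
  field_simp
  linarith

/-- the Siklos metric is Einstein iff `(2/x₃)H'₃ − H''₃₃ − H''₄₄ = 0`,
and then the Einstein constant is `−3/β²`. -/
theorem stmt_3 (β : ℝ) (hβ : 0 < β) (H : ℝ → ℝ → ℝ → ℝ)
    (hH : ContDiff ℝ (⊤ : ℕ∞) fun p : ℝ × ℝ × ℝ => H p.1 p.2.1 p.2.2) :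
    ((∃ lam : ℝ, ∀ x : Fin 4 → ℝ, 0 < x 2 → ∀ i j : Fin 4,
        ricci β H x i j = lam * siklos β H x i j) ↔
      (∀ a b c : ℝ, 0 < b → 2 / b * H3 H a b c - H33 H a b c - H44 H a b c = 0)) ∧
    (∀ lam : ℝ, (∀ x : Fin 4 → ℝ, 0 < x 2 → ∀ i j : Fin 4,
        ricci β H x i j = lam * siklos β H x i j) → lam = -3 / β ^ 2) := by
  have hβ' : β ≠ 0 := ne_of_gt hβ
  have hH' : ContDiff ℝ (⊤ : ℕ∞) (SiklosProof.unc H) := hH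
  constructor
  · constructor
    · rintro ⟨lam, hl⟩ a b c hb
      have hlam := stmt_3_aux hβ' hH' lam hl
      subst hlam
      have hx2 : ((![0, a, b, c] : Fin 4 → ℝ) 2) = b := by simp
      have h11 := hl ![0, a, b, c] (by rw [hx2]; exact hb) 1 1
      rw [SiklosProof.ricci_eq hβ' hH' ![0, a, b, c] (by rw [hx2]; exact ne_of_gt hb) 1 1] at h11
      have hx1 : ((![0, a, b, c] : Fin 4 → ℝ) 1) = a := by simp
      have hx3 : ((![0, a, b, c] : Fin 4 → ℝ) 3) = c := by simp
      simp only [SiklosProof.Rc, siklos, Matrix.of_apply, hx1, hx2, hx3, Fin.reduceEq,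
        and_false, false_and, and_true, true_and, or_false, false_or, or_true, true_or,
        and_self, reduceIte] at h11
      have hb' : b ≠ 0 := ne_of_gt hb
      have hr : -3 / β ^ 2 * (β ^ 2 / b ^ 2 * H a b c) = -(3 / b ^ 2) * H a b c := by
        field_simp
      rw [hr] at h11
      linear_combination 2 * h11
    · intro hpde
      refine ⟨-3 / β ^ 2, fun x hx2 i j => ?_⟩
      have hx2' : x 2 ≠ 0 := ne_of_gt hx2
      rw [SiklosProof.ricci_eq hβ' hH' x hx2' i j]
      have hp := hpde (x 1) (x 2) (x 3) hx2
      have key2 : 2 * H3 H (x 1) (x 2) (x 3) = x 2 * H33 H (x 1) (x 2) (x 3)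
          + x 2 * H44 H (x 1) (x 2) (x 3) := by
        field_simp at hp
        linarith
      fin_cases i <;> fin_cases j <;>
        (simp only [SiklosProof.Rc, siklos, Matrix.of_apply, Fin.zero_eta, Fin.mk_one,
           Fin.reduceFinMk, Fin.reduceEq, and_false, false_and, and_true, true_and, or_false,
           false_or, or_true, true_or, and_self, reduceIte];
         first
           | (field_simp; linear_combination (2 * x 2 ^ 4 * β ^ 2) * key2)
           | (field_simp; linear_combination (x 2) * key2)
           | (field_simp; ring)
           | field_simp
           | ring
           | simp)
  · exact fun lam hl => stmt_3_aux hβ' hH' lam hl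
end

section
/- The Siklos metric has constant sectional curvature −1/β², in the sense that R(∂ᵢ,∂ⱼ)∂ₖ = −(1/β²)(gⱼₖ∂ᵢ − gᵢₖ∂ⱼ) for all i,j,k at every x with x₃ > 0, if and only if H satisfies the three equations (2/x₃)H'₃ − H''₃₃ − H''₄₄ = 0, H''₃₃ − H''₄₄ = 0 and H''₃₄ = 0 at every (x₂,x₃,x₄) with x₃ > 0. -/
open scoped BigOperators

namespace SA
variable {H : ℝ → ℝ → ℝ → ℝ}

noncomputable def FF (H : ℝ → ℝ → ℝ → ℝ) : ℝ × ℝ × ℝ → ℝ := fun p => H p.1 p.2.1 p.2.2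
/-- `∂₁H4 = H''₂₄`. -/
noncomputable def H24 (H : ℝ → ℝ → ℝ → ℝ) (a b c : ℝ) : ℝ := deriv (fun t => H4 H t b c) a
/-- `∂₁H2 = H''₂₂`. -/
noncomputable def H22 (H : ℝ → ℝ → ℝ → ℝ) (a b c : ℝ) : ℝ := deriv (fun t => H2 H t b c) a

lemma line1 (a b c : ℝ) : HasDerivAt (fun t : ℝ => ((t, b, c) : ℝ × ℝ × ℝ)) (1, 0, 0) a :=
  (hasDerivAt_id a).prodMk ((hasDerivAt_const a b).prodMk (hasDerivAt_const a c))
lemma line2 (a b c : ℝ) : HasDerivAt (fun t : ℝ => ((a, t, c) : ℝ × ℝ × ℝ)) (0, 1, 0) b :=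
  (hasDerivAt_const b a).prodMk ((hasDerivAt_id b).prodMk (hasDerivAt_const b c))
lemma line3 (a b c : ℝ) : HasDerivAt (fun t : ℝ => ((a, b, t) : ℝ × ℝ × ℝ)) (0, 0, 1) c :=
  (hasDerivAt_const c a).prodMk ((hasDerivAt_const c b).prodMk (hasDerivAt_id c))

lemma pl1 {a b c : ℝ} (G : ℝ × ℝ × ℝ → ℝ) (hG : DifferentiableAt ℝ G (a, b, c)) :
    HasDerivAt (fun t => G (t, b, c)) (fderiv ℝ G (a, b, c) (1, 0, 0)) a :=
  hG.hasFDerivAt.comp_hasDerivAt a (line1 a b c)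
lemma pl2 {a b c : ℝ} (G : ℝ × ℝ × ℝ → ℝ) (hG : DifferentiableAt ℝ G (a, b, c)) :
    HasDerivAt (fun t => G (a, t, c)) (fderiv ℝ G (a, b, c) (0, 1, 0)) b :=
  hG.hasFDerivAt.comp_hasDerivAt b (line2 a b c)
lemma pl3 {a b c : ℝ} (G : ℝ × ℝ × ℝ → ℝ) (hG : DifferentiableAt ℝ G (a, b, c)) :
    HasDerivAt (fun t => G (a, b, t)) (fderiv ℝ G (a, b, c) (0, 0, 1)) c :=
  hG.hasFDerivAt.comp_hasDerivAt c (line3 a b c)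

variable (hH : ContDiff ℝ (⊤ : ℕ∞) (FF H))
include hH

lemma H2eq (a b c : ℝ) : H2 H a b c = fderiv ℝ (FF H) (a, b, c) (1, 0, 0) :=
  (pl1 (FF H) ((hH.differentiable (by simp)) _)).deriv
lemma H3eq (a b c : ℝ) : H3 H a b c = fderiv ℝ (FF H) (a, b, c) (0, 1, 0) :=
  (pl2 (FF H) ((hH.differentiable (by simp)) _)).deriv
lemma H4eq (a b c : ℝ) : H4 H a b c = fderiv ℝ (FF H) (a, b, c) (0, 0, 1) :=
  (pl3 (FF H) ((hH.differentiable (by simp)) _)).deriv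

lemma contDiff_fderiv_apply (v : ℝ × ℝ × ℝ) :
    ContDiff ℝ (⊤ : ℕ∞) (fun p => fderiv ℝ (FF H) p v) :=
  (ContinuousLinearMap.apply ℝ ℝ v).contDiff.comp (hH.fderiv_right (by simp))

lemma fderiv_fderiv_apply (v w : ℝ × ℝ × ℝ) (p : ℝ × ℝ × ℝ) :
    fderiv ℝ (fun q => fderiv ℝ (FF H) q v) p w = fderiv ℝ (fderiv ℝ (FF H)) p w v := by
  rw [fderiv_clm_apply ((hH.fderiv_right (m := 1) (WithTop.coe_le_coe.mpr le_top)).differentiable one_ne_zero p)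
    (differentiableAt_const v)]
  simp

lemma symm2 (p : ℝ × ℝ × ℝ) (v w : ℝ × ℝ × ℝ) :
    fderiv ℝ (fderiv ℝ (FF H)) p v w = fderiv ℝ (fderiv ℝ (FF H)) p w v :=
  (hH.contDiffAt.isSymmSndFDerivAt (by rw [minSmoothness_of_isRCLikeNormedField]; exact WithTop.coe_le_coe.mpr le_top)) v w

-- differentiability of coordinate lines of H
lemma dH_1 (a b c : ℝ) : DifferentiableAt ℝ (fun t => H t b c) a :=
  (pl1 (FF H) ((hH.differentiable (by simp)) _)).differentiableAt
lemma dH_2 (a b c : ℝ) : DifferentiableAt ℝ (fun t => H a t c) b :=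
  (pl2 (FF H) ((hH.differentiable (by simp)) _)).differentiableAt
lemma dH_3 (a b c : ℝ) : DifferentiableAt ℝ (fun t => H a b t) c :=
  (pl3 (FF H) ((hH.differentiable (by simp)) _)).differentiableAt

-- coordinate lines of H2, H3, H4 as fderiv compositions
lemma H2fun2 (a c : ℝ) : (fun t => H2 H a t c) = fun t => fderiv ℝ (FF H) (a, t, c) (1, 0, 0) :=
  funext fun t => H2eq hH a t c
lemma H2fun3 (a b : ℝ) : (fun t => H2 H a b t) = fun t => fderiv ℝ (FF H) (a, b, t) (1, 0, 0) :=
  funext fun t => H2eq hH a b t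
lemma H3fun1 (b c : ℝ) : (fun t => H3 H t b c) = fun t => fderiv ℝ (FF H) (t, b, c) (0, 1, 0) :=
  funext fun t => H3eq hH t b c
lemma H3fun2 (a c : ℝ) : (fun t => H3 H a t c) = fun t => fderiv ℝ (FF H) (a, t, c) (0, 1, 0) :=
  funext fun t => H3eq hH a t c
lemma H3fun3 (a b : ℝ) : (fun t => H3 H a b t) = fun t => fderiv ℝ (FF H) (a, b, t) (0, 1, 0) :=
  funext fun t => H3eq hH a b t
lemma H4fun1 (b c : ℝ) : (fun t => H4 H t b c) = fun t => fderiv ℝ (FF H) (t, b, c) (0, 0, 1) :=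
  funext fun t => H4eq hH t b c
lemma H4fun2 (a c : ℝ) : (fun t => H4 H a t c) = fun t => fderiv ℝ (FF H) (a, t, c) (0, 0, 1) :=
  funext fun t => H4eq hH a t c

lemma dH3_1 (a b c : ℝ) : DifferentiableAt ℝ (fun t => H3 H t b c) a := by
  rw [H3fun1 hH]
  exact (pl1 _ (((contDiff_fderiv_apply hH _).differentiable (by simp)) _)).differentiableAt
lemma dH3_2 (a b c : ℝ) : DifferentiableAt ℝ (fun t => H3 H a t c) b := by
  rw [H3fun2 hH]
  exact (pl2 _ (((contDiff_fderiv_apply hH _).differentiable (by simp)) _)).differentiableAt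
lemma dH3_3 (a b c : ℝ) : DifferentiableAt ℝ (fun t => H3 H a b t) c := by
  rw [H3fun3 hH]
  exact (pl3 _ (((contDiff_fderiv_apply hH _).differentiable (by simp)) _)).differentiableAt

-- second partials as second fderiv
lemma H23eq (a b c : ℝ) :
    H23 H a b c = fderiv ℝ (fderiv ℝ (FF H)) (a, b, c) (1, 0, 0) (0, 1, 0) := by
  have h2 := (pl1 (a := a) (b := b) (c := c) (fun q => fderiv ℝ (FF H) q (0, 1, 0))
    (((contDiff_fderiv_apply hH _).differentiable (by simp)) _)).deriv
  rw [H23, H3fun1 hH, h2, fderiv_fderiv_apply hH]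
lemma H24eq (a b c : ℝ) :
    H24 H a b c = fderiv ℝ (fderiv ℝ (FF H)) (a, b, c) (1, 0, 0) (0, 0, 1) := by
  have h2 := (pl1 (a := a) (b := b) (c := c) (fun q => fderiv ℝ (FF H) q (0, 0, 1))
    (((contDiff_fderiv_apply hH _).differentiable (by simp)) _)).deriv
  rw [H24, H4fun1 hH, h2, fderiv_fderiv_apply hH]
lemma H34eq (a b c : ℝ) :
    H34 H a b c = fderiv ℝ (fderiv ℝ (FF H)) (a, b, c) (0, 1, 0) (0, 0, 1) := by
  have h2 := (pl2 (a := a) (b := b) (c := c) (fun q => fderiv ℝ (FF H) q (0, 0, 1))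
    (((contDiff_fderiv_apply hH _).differentiable (by simp)) _)).deriv
  rw [H34, H4fun2 hH, h2, fderiv_fderiv_apply hH]

-- Schwarz lemmas
lemma schw1 (a b c : ℝ) : deriv (fun t => H2 H a t c) b = H23 H a b c := by
  have h2 := (pl2 (a := a) (b := b) (c := c) (fun q => fderiv ℝ (FF H) q (1, 0, 0))
    (((contDiff_fderiv_apply hH _).differentiable (by simp)) _)).deriv
  rw [H2fun2 hH, h2, fderiv_fderiv_apply hH, H23eq hH, symm2 hH]
lemma schw2 (a b c : ℝ) : deriv (fun t => H2 H a b t) c = H24 H a b c := by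
  have h2 := (pl3 (a := a) (b := b) (c := c) (fun q => fderiv ℝ (FF H) q (1, 0, 0))
    (((contDiff_fderiv_apply hH _).differentiable (by simp)) _)).deriv
  rw [H2fun3 hH, h2, fderiv_fderiv_apply hH, H24eq hH, symm2 hH]
lemma schw3 (a b c : ℝ) : deriv (fun t => H3 H a b t) c = H34 H a b c := by
  have h2 := (pl3 (a := a) (b := b) (c := c) (fun q => fderiv ℝ (FF H) q (0, 1, 0))
    (((contDiff_fderiv_apply hH _).differentiable (by simp)) _)).deriv
  rw [H3fun3 hH, h2, fderiv_fderiv_apply hH, H34eq hH, symm2 hH]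

end SA

namespace SA
section PD
variable {β : ℝ} {H : ℝ → ℝ → ℝ → ℝ} {x : Fin 4 → ℝ}

lemma pdZ (d : Fin 4) : pd d (fun _ => (0:ℝ)) x = 0 := by
  simp only [pd, deriv_const]

-- shape N : fun y => -(y 2)⁻¹
lemma pdN0 : pd 0 (fun y => -(y 2)⁻¹) x = 0 := by
  have h : (fun t => -(Function.update x 0 t 2)⁻¹) = fun _ => -(x 2)⁻¹ := by funext t; simp
  simp only [pd]; rw [h, deriv_const]
lemma pdN1 : pd 1 (fun y => -(y 2)⁻¹) x = 0 := by
  have h : (fun t => -(Function.update x 1 t 2)⁻¹) = fun _ => -(x 2)⁻¹ := by funext t; simp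
  simp only [pd]; rw [h, deriv_const]
lemma pdN3 : pd 3 (fun y => -(y 2)⁻¹) x = 0 := by
  have h : (fun t => -(Function.update x 3 t 2)⁻¹) = fun _ => -(x 2)⁻¹ := by funext t; simp
  simp only [pd]; rw [h, deriv_const]
lemma pdN2 : pd 2 (fun y => -(y 2)⁻¹) x = ((x 2) ^ 2)⁻¹ := by
  have h : (fun t => -(Function.update x 2 t 2)⁻¹) = fun t => -t⁻¹ := by funext t; simp
  simp only [pd]; rw [h, deriv.fun_neg, deriv_inv]
  simp

-- shape P : fun y => (y 2)⁻¹
lemma pdP0 : pd 0 (fun y => (y 2)⁻¹) x = 0 := by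
  have h : (fun t => (Function.update x 0 t 2)⁻¹) = fun _ => (x 2)⁻¹ := by funext t; simp
  simp only [pd]; rw [h, deriv_const]
lemma pdP1 : pd 1 (fun y => (y 2)⁻¹) x = 0 := by
  have h : (fun t => (Function.update x 1 t 2)⁻¹) = fun _ => (x 2)⁻¹ := by funext t; simp
  simp only [pd]; rw [h, deriv_const]
lemma pdP3 : pd 3 (fun y => (y 2)⁻¹) x = 0 := by
  have h : (fun t => (Function.update x 3 t 2)⁻¹) = fun _ => (x 2)⁻¹ := by funext t; simp
  simp only [pd]; rw [h, deriv_const]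
lemma pdP2 : pd 2 (fun y => (y 2)⁻¹) x = -((x 2) ^ 2)⁻¹ := by
  have h : (fun t => (Function.update x 2 t 2)⁻¹) = fun t => t⁻¹ := by funext t; simp
  simp only [pd]; rw [h, deriv_inv]

-- shape F2 : fun y => H2 H (y 1) (y 2) (y 3) / 2
lemma pdF2_0 : pd 0 (fun y => H2 H (y 1) (y 2) (y 3) / 2) x = 0 := by
  have h : (fun t => H2 H (Function.update x 0 t 1) (Function.update x 0 t 2)
      (Function.update x 0 t 3) / 2) = fun _ => H2 H (x 1) (x 2) (x 3) / 2 := by funext t; simp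
  simp only [pd]; rw [h, deriv_const]
lemma pdF2_1 : pd 1 (fun y => H2 H (y 1) (y 2) (y 3) / 2) x = H22 H (x 1) (x 2) (x 3) / 2 := by
  have h : (fun t => H2 H (Function.update x 1 t 1) (Function.update x 1 t 2)
      (Function.update x 1 t 3) / 2) = fun t => H2 H t (x 2) (x 3) / 2 := by funext t; simp
  simp only [pd]; rw [h, deriv_div_const]; rfl
lemma pdF2_2 (hH : ContDiff ℝ (⊤ : ℕ∞) (FF H)) :
    pd 2 (fun y => H2 H (y 1) (y 2) (y 3) / 2) x = H23 H (x 1) (x 2) (x 3) / 2 := by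
  have h : (fun t => H2 H (Function.update x 2 t 1) (Function.update x 2 t 2)
      (Function.update x 2 t 3) / 2) = fun t => H2 H (x 1) t (x 3) / 2 := by funext t; simp
  simp only [pd]; rw [h, deriv_div_const, schw1 hH]
lemma pdF2_3 (hH : ContDiff ℝ (⊤ : ℕ∞) (FF H)) :
    pd 3 (fun y => H2 H (y 1) (y 2) (y 3) / 2) x = H24 H (x 1) (x 2) (x 3) / 2 := by
  have h : (fun t => H2 H (Function.update x 3 t 1) (Function.update x 3 t 2)
      (Function.update x 3 t 3) / 2) = fun t => H2 H (x 1) (x 2) t / 2 := by funext t; simp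
  simp only [pd]; rw [h, deriv_div_const, schw2 hH]

-- shape F3 : fun y => H3 H (y 1) (y 2) (y 3) / 2
lemma pdF3_0 : pd 0 (fun y => H3 H (y 1) (y 2) (y 3) / 2) x = 0 := by
  have h : (fun t => H3 H (Function.update x 0 t 1) (Function.update x 0 t 2)
      (Function.update x 0 t 3) / 2) = fun _ => H3 H (x 1) (x 2) (x 3) / 2 := by funext t; simp
  simp only [pd]; rw [h, deriv_const]
lemma pdF3_1 : pd 1 (fun y => H3 H (y 1) (y 2) (y 3) / 2) x = H23 H (x 1) (x 2) (x 3) / 2 := by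
  have h : (fun t => H3 H (Function.update x 1 t 1) (Function.update x 1 t 2)
      (Function.update x 1 t 3) / 2) = fun t => H3 H t (x 2) (x 3) / 2 := by funext t; simp
  simp only [pd]; rw [h, deriv_div_const]; rfl
lemma pdF3_2 : pd 2 (fun y => H3 H (y 1) (y 2) (y 3) / 2) x = H33 H (x 1) (x 2) (x 3) / 2 := by
  have h : (fun t => H3 H (Function.update x 2 t 1) (Function.update x 2 t 2)
      (Function.update x 2 t 3) / 2) = fun t => H3 H (x 1) t (x 3) / 2 := by funext t; simp
  simp only [pd]; rw [h, deriv_div_const]; rfl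
lemma pdF3_3 (hH : ContDiff ℝ (⊤ : ℕ∞) (FF H)) :
    pd 3 (fun y => H3 H (y 1) (y 2) (y 3) / 2) x = H34 H (x 1) (x 2) (x 3) / 2 := by
  have h : (fun t => H3 H (Function.update x 3 t 1) (Function.update x 3 t 2)
      (Function.update x 3 t 3) / 2) = fun t => H3 H (x 1) (x 2) t / 2 := by funext t; simp
  simp only [pd]; rw [h, deriv_div_const, schw3 hH]

-- shape F4 : fun y => H4 H (y 1) (y 2) (y 3) / 2
lemma pdF4_0 : pd 0 (fun y => H4 H (y 1) (y 2) (y 3) / 2) x = 0 := by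
  have h : (fun t => H4 H (Function.update x 0 t 1) (Function.update x 0 t 2)
      (Function.update x 0 t 3) / 2) = fun _ => H4 H (x 1) (x 2) (x 3) / 2 := by funext t; simp
  simp only [pd]; rw [h, deriv_const]
lemma pdF4_1 : pd 1 (fun y => H4 H (y 1) (y 2) (y 3) / 2) x = H24 H (x 1) (x 2) (x 3) / 2 := by
  have h : (fun t => H4 H (Function.update x 1 t 1) (Function.update x 1 t 2)
      (Function.update x 1 t 3) / 2) = fun t => H4 H t (x 2) (x 3) / 2 := by funext t; simp
  simp only [pd]; rw [h, deriv_div_const]; rfl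
lemma pdF4_2 : pd 2 (fun y => H4 H (y 1) (y 2) (y 3) / 2) x = H34 H (x 1) (x 2) (x 3) / 2 := by
  have h : (fun t => H4 H (Function.update x 2 t 1) (Function.update x 2 t 2)
      (Function.update x 2 t 3) / 2) = fun t => H4 H (x 1) t (x 3) / 2 := by funext t; simp
  simp only [pd]; rw [h, deriv_div_const]; rfl
lemma pdF4_3 : pd 3 (fun y => H4 H (y 1) (y 2) (y 3) / 2) x = H44 H (x 1) (x 2) (x 3) / 2 := by
  have h : (fun t => H4 H (Function.update x 3 t 1) (Function.update x 3 t 2)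
      (Function.update x 3 t 3) / 2) = fun t => H4 H (x 1) (x 2) t / 2 := by funext t; simp
  simp only [pd]; rw [h, deriv_div_const]; rfl

-- shape NF4 : fun y => -(H4 H (y 1) (y 2) (y 3) / 2)
lemma pdNF4_0 : pd 0 (fun y => -(H4 H (y 1) (y 2) (y 3) / 2)) x = 0 := by
  have h : (fun t => -(H4 H (Function.update x 0 t 1) (Function.update x 0 t 2)
      (Function.update x 0 t 3) / 2)) = fun _ => -(H4 H (x 1) (x 2) (x 3) / 2) := by
    funext t; simp
  simp only [pd]; rw [h, deriv_const]
lemma pdNF4_1 : pd 1 (fun y => -(H4 H (y 1) (y 2) (y 3) / 2)) x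
    = -(H24 H (x 1) (x 2) (x 3) / 2) := by
  have h : (fun t => -(H4 H (Function.update x 1 t 1) (Function.update x 1 t 2)
      (Function.update x 1 t 3) / 2)) = fun t => -(H4 H t (x 2) (x 3) / 2) := by funext t; simp
  simp only [pd]; rw [h, deriv.fun_neg, deriv_div_const]; rfl
lemma pdNF4_2 : pd 2 (fun y => -(H4 H (y 1) (y 2) (y 3) / 2)) x
    = -(H34 H (x 1) (x 2) (x 3) / 2) := by
  have h : (fun t => -(H4 H (Function.update x 2 t 1) (Function.update x 2 t 2)
      (Function.update x 2 t 3) / 2)) = fun t => -(H4 H (x 1) t (x 3) / 2) := by funext t; simp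
  simp only [pd]; rw [h, deriv.fun_neg, deriv_div_const]; rfl
lemma pdNF4_3 : pd 3 (fun y => -(H4 H (y 1) (y 2) (y 3) / 2)) x
    = -(H44 H (x 1) (x 2) (x 3) / 2) := by
  have h : (fun t => -(H4 H (Function.update x 3 t 1) (Function.update x 3 t 2)
      (Function.update x 3 t 3) / 2)) = fun t => -(H4 H (x 1) (x 2) t / 2) := by funext t; simp
  simp only [pd]; rw [h, deriv.fun_neg, deriv_div_const]; rfl

-- shape M : fun y => H (y 1) (y 2) (y 3) * (y 2)⁻¹ - H3 H (y 1) (y 2) (y 3) / 2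
lemma pdM0 : pd 0 (fun y => H (y 1) (y 2) (y 3) * (y 2)⁻¹ - H3 H (y 1) (y 2) (y 3) / 2) x
    = 0 := by
  have h : (fun t => H (Function.update x 0 t 1) (Function.update x 0 t 2)
      (Function.update x 0 t 3) * (Function.update x 0 t 2)⁻¹
      - H3 H (Function.update x 0 t 1) (Function.update x 0 t 2)
        (Function.update x 0 t 3) / 2)
      = fun _ => H (x 1) (x 2) (x 3) * (x 2)⁻¹ - H3 H (x 1) (x 2) (x 3) / 2 := by
    funext t; simp
  simp only [pd]; rw [h, deriv_const]
lemma pdM1 (hH : ContDiff ℝ (⊤ : ℕ∞) (FF H)) :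
    pd 1 (fun y => H (y 1) (y 2) (y 3) * (y 2)⁻¹ - H3 H (y 1) (y 2) (y 3) / 2) x
    = H2 H (x 1) (x 2) (x 3) * (x 2)⁻¹ - H23 H (x 1) (x 2) (x 3) / 2 := by
  have h : (fun t => H (Function.update x 1 t 1) (Function.update x 1 t 2)
      (Function.update x 1 t 3) * (Function.update x 1 t 2)⁻¹
      - H3 H (Function.update x 1 t 1) (Function.update x 1 t 2)
        (Function.update x 1 t 3) / 2)
      = fun t => H t (x 2) (x 3) * (x 2)⁻¹ - H3 H t (x 2) (x 3) / 2 := by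
    funext t; simp
  simp only [pd]
  rw [h, deriv_fun_sub ((dH_1 hH _ _ _).mul_const _) ((dH3_1 hH _ _ _).div_const 2),
    deriv_mul_const (dH_1 hH _ _ _), deriv_div_const]
  rfl
lemma pdM2 (hH : ContDiff ℝ (⊤ : ℕ∞) (FF H)) (hx : x 2 ≠ 0) :
    pd 2 (fun y => H (y 1) (y 2) (y 3) * (y 2)⁻¹ - H3 H (y 1) (y 2) (y 3) / 2) x
    = H3 H (x 1) (x 2) (x 3) * (x 2)⁻¹ - H (x 1) (x 2) (x 3) * ((x 2) ^ 2)⁻¹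
      - H33 H (x 1) (x 2) (x 3) / 2 := by
  have h : (fun t => H (Function.update x 2 t 1) (Function.update x 2 t 2)
      (Function.update x 2 t 3) * (Function.update x 2 t 2)⁻¹
      - H3 H (Function.update x 2 t 1) (Function.update x 2 t 2)
        (Function.update x 2 t 3) / 2)
      = fun t => H (x 1) t (x 3) * t⁻¹ - H3 H (x 1) t (x 3) / 2 := by
    funext t; simp
  simp only [pd]
  rw [h, deriv_fun_sub ((dH_2 hH _ _ _).fun_mul (hasDerivAt_inv hx).differentiableAt)
      ((dH3_2 hH _ _ _).div_const 2),
    deriv_fun_mul (dH_2 hH _ _ _) (hasDerivAt_inv hx).differentiableAt, deriv_inv,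
    deriv_div_const]
  have e1 : deriv (fun t => H (x 1) t (x 3)) (x 2) = H3 H (x 1) (x 2) (x 3) := rfl
  have e2 : deriv (fun t => H3 H (x 1) t (x 3)) (x 2) = H33 H (x 1) (x 2) (x 3) := rfl
  rw [e1, e2]; ring
lemma pdM3 (hH : ContDiff ℝ (⊤ : ℕ∞) (FF H)) :
    pd 3 (fun y => H (y 1) (y 2) (y 3) * (y 2)⁻¹ - H3 H (y 1) (y 2) (y 3) / 2) x
    = H4 H (x 1) (x 2) (x 3) * (x 2)⁻¹ - H34 H (x 1) (x 2) (x 3) / 2 := by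
  have h : (fun t => H (Function.update x 3 t 1) (Function.update x 3 t 2)
      (Function.update x 3 t 3) * (Function.update x 3 t 2)⁻¹
      - H3 H (Function.update x 3 t 1) (Function.update x 3 t 2)
        (Function.update x 3 t 3) / 2)
      = fun t => H (x 1) (x 2) t * (x 2)⁻¹ - H3 H (x 1) (x 2) t / 2 := by
    funext t; simp
  simp only [pd]
  rw [h, deriv_fun_sub ((dH_3 hH _ _ _).mul_const _) ((dH3_3 hH _ _ _).div_const 2),
    deriv_mul_const (dH_3 hH _ _ _), deriv_div_const, schw3 hH]
  rfl

-- shape A : fun y => β ^ 2 / y 2 ^ 2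
lemma pdA0 : pd 0 (fun y => β ^ 2 / y 2 ^ 2) x = 0 := by
  have h : (fun t => β ^ 2 / Function.update x 0 t 2 ^ 2) = fun _ => β ^ 2 / x 2 ^ 2 := by
    funext t; simp
  simp only [pd]; rw [h, deriv_const]
lemma pdA1 : pd 1 (fun y => β ^ 2 / y 2 ^ 2) x = 0 := by
  have h : (fun t => β ^ 2 / Function.update x 1 t 2 ^ 2) = fun _ => β ^ 2 / x 2 ^ 2 := by
    funext t; simp
  simp only [pd]; rw [h, deriv_const]
lemma pdA3 : pd 3 (fun y => β ^ 2 / y 2 ^ 2) x = 0 := by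
  have h : (fun t => β ^ 2 / Function.update x 3 t 2 ^ 2) = fun _ => β ^ 2 / x 2 ^ 2 := by
    funext t; simp
  simp only [pd]; rw [h, deriv_const]
lemma pdA2 (hx : x 2 ≠ 0) :
    pd 2 (fun y => β ^ 2 / y 2 ^ 2) x = -(2 * β ^ 2 / x 2 ^ 3) := by
  have h : (fun t => β ^ 2 / Function.update x 2 t 2 ^ 2) = fun t => β ^ 2 / t ^ 2 := by
    funext t; simp
  have hd : HasDerivAt (fun t : ℝ => β ^ 2 / t ^ 2)
      ((0 * x 2 ^ 2 - β ^ 2 * (2 * x 2 ^ 1)) / (x 2 ^ 2) ^ 2) (x 2) :=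
    (hasDerivAt_const _ _).div (hasDerivAt_pow 2 _) (pow_ne_zero 2 hx)
  simp only [pd]; rw [h, hd.deriv]
  field_simp; ring

-- shape B : fun y => β ^ 2 / y 2 ^ 2 * H (y 1) (y 2) (y 3)
lemma pdB0 : pd 0 (fun y => β ^ 2 / y 2 ^ 2 * H (y 1) (y 2) (y 3)) x = 0 := by
  have h : (fun t => β ^ 2 / Function.update x 0 t 2 ^ 2 * H (Function.update x 0 t 1)
      (Function.update x 0 t 2) (Function.update x 0 t 3))
      = fun _ => β ^ 2 / x 2 ^ 2 * H (x 1) (x 2) (x 3) := by funext t; simp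
  simp only [pd]; rw [h, deriv_const]
lemma pdB1 : pd 1 (fun y => β ^ 2 / y 2 ^ 2 * H (y 1) (y 2) (y 3)) x
    = β ^ 2 / x 2 ^ 2 * H2 H (x 1) (x 2) (x 3) := by
  have h : (fun t => β ^ 2 / Function.update x 1 t 2 ^ 2 * H (Function.update x 1 t 1)
      (Function.update x 1 t 2) (Function.update x 1 t 3))
      = fun t => β ^ 2 / x 2 ^ 2 * H t (x 2) (x 3) := by funext t; simp
  simp only [pd]; rw [h, deriv_const_mul_field]; rfl
lemma pdB3 : pd 3 (fun y => β ^ 2 / y 2 ^ 2 * H (y 1) (y 2) (y 3)) x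
    = β ^ 2 / x 2 ^ 2 * H4 H (x 1) (x 2) (x 3) := by
  have h : (fun t => β ^ 2 / Function.update x 3 t 2 ^ 2 * H (Function.update x 3 t 1)
      (Function.update x 3 t 2) (Function.update x 3 t 3))
      = fun t => β ^ 2 / x 2 ^ 2 * H (x 1) (x 2) t := by funext t; simp
  simp only [pd]; rw [h, deriv_const_mul_field]; rfl
lemma pdB2 (hH : ContDiff ℝ (⊤ : ℕ∞) (FF H)) (hx : x 2 ≠ 0) :
    pd 2 (fun y => β ^ 2 / y 2 ^ 2 * H (y 1) (y 2) (y 3)) x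
    = -(2 * β ^ 2 / x 2 ^ 3) * H (x 1) (x 2) (x 3)
      + β ^ 2 / x 2 ^ 2 * H3 H (x 1) (x 2) (x 3) := by
  have h : (fun t => β ^ 2 / Function.update x 2 t 2 ^ 2 * H (Function.update x 2 t 1)
      (Function.update x 2 t 2) (Function.update x 2 t 3))
      = fun t => β ^ 2 / t ^ 2 * H (x 1) t (x 3) := by funext t; simp
  have hd : HasDerivAt (fun t : ℝ => β ^ 2 / t ^ 2)
      ((0 * x 2 ^ 2 - β ^ 2 * (2 * x 2 ^ 1)) / (x 2 ^ 2) ^ 2) (x 2) :=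
    (hasDerivAt_const _ _).div (hasDerivAt_pow 2 _) (pow_ne_zero 2 hx)
  simp only [pd]
  rw [h, deriv_fun_mul hd.differentiableAt (dH_2 hH _ _ _), hd.deriv]
  have e1 : deriv (fun t => H (x 1) t (x 3)) (x 2) = H3 H (x 1) (x 2) (x 3) := rfl
  rw [e1]; field_simp; ring

end PD
end SA
namespace SA
section CH
variable {β : ℝ} {H : ℝ → ℝ → ℝ → ℝ} {x : Fin 4 → ℝ}

/-- Explicit table of Christoffel symbols of the Siklos metric. -/
noncomputable def Gam (β : ℝ) (H : ℝ → ℝ → ℝ → ℝ) (k i j : Fin 4) (y : Fin 4 → ℝ) : ℝ :=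
  if (k = 0 ∧ ((i = 0 ∧ j = 2) ∨ (i = 2 ∧ j = 0)))
      ∨ (k = 1 ∧ ((i = 1 ∧ j = 2) ∨ (i = 2 ∧ j = 1)))
      ∨ (k = 2 ∧ i = 2 ∧ j = 2)
      ∨ (k = 3 ∧ ((i = 2 ∧ j = 3) ∨ (i = 3 ∧ j = 2))) then -(y 2)⁻¹
  else if (k = 2 ∧ ((i = 0 ∧ j = 1) ∨ (i = 1 ∧ j = 0))) ∨ (k = 2 ∧ i = 3 ∧ j = 3) then (y 2)⁻¹
  else if k = 0 ∧ i = 1 ∧ j = 1 then H2 H (y 1) (y 2) (y 3) / 2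
  else if k = 0 ∧ ((i = 1 ∧ j = 2) ∨ (i = 2 ∧ j = 1)) then H3 H (y 1) (y 2) (y 3) / 2
  else if k = 0 ∧ ((i = 1 ∧ j = 3) ∨ (i = 3 ∧ j = 1)) then H4 H (y 1) (y 2) (y 3) / 2
  else if k = 2 ∧ i = 1 ∧ j = 1 then
    H (y 1) (y 2) (y 3) * (y 2)⁻¹ - H3 H (y 1) (y 2) (y 3) / 2
  else if k = 3 ∧ i = 1 ∧ j = 1 then -(H4 H (y 1) (y 2) (y 3) / 2)
  else 0

/-- Explicit inverse of the Siklos metric. -/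
noncomputable def sikInv (β : ℝ) (H : ℝ → ℝ → ℝ → ℝ) (x : Fin 4 → ℝ) :
    Matrix (Fin 4) (Fin 4) ℝ :=
  Matrix.of fun i j =>
    if i = 0 ∧ j = 0 then -(H (x 1) (x 2) (x 3)) * (x 2 ^ 2 / β ^ 2)
    else if (i = 0 ∧ j = 1) ∨ (i = 1 ∧ j = 0) ∨ (i = 2 ∧ j = 2) ∨ (i = 3 ∧ j = 3) then
      x 2 ^ 2 / β ^ 2
    else 0

lemma siklos_inv (hβ : β ≠ 0) (hx : x 2 ≠ 0) : (siklos β H x)⁻¹ = sikInv β H x := by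
  apply Matrix.inv_eq_right_inv
  ext i j
  fin_cases i <;> fin_cases j <;>
    simp [Matrix.mul_apply, Fin.sum_univ_four, siklos, sikInv, Matrix.one_apply]
  all_goals field_simp
  all_goals try ring

set_option maxHeartbeats 1600000 in
lemma christoffel_eq (hβ : β ≠ 0) (hH : ContDiff ℝ (⊤ : ℕ∞) (FF H)) (hx : x 2 ≠ 0) (k i j : Fin 4) :
    christoffel (siklos β H) x k i j = Gam β H k i j x := by
  rw [christoffel, siklos_inv hβ hx]
  fin_cases k <;> fin_cases i <;> fin_cases j <;>
    simp [Fin.sum_univ_four, sikInv, siklos, Gam, pdZ,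
      pdA0, pdA1, pdA2 hx, pdA3, pdB0, pdB1, pdB2 hH hx, pdB3]
  all_goals field_simp
  all_goals try ring

end CH
end SA
namespace SA
section CURV
open Topology
variable {β : ℝ} {H : ℝ → ℝ → ℝ → ℝ} {x : Fin 4 → ℝ}

lemma pd_christoffel (hβ : β ≠ 0) (hH : ContDiff ℝ (⊤ : ℕ∞) (FF H)) (hx : x 2 ≠ 0) (d l j k : Fin 4) :
    pd d (fun y => christoffel (siklos β H) y l j k) x
      = pd d (fun y => Gam β H l j k y) x := by
  unfold pd
  apply Filter.EventuallyEq.deriv_eq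
  have hev : ∀ᶠ t in 𝓝 (x d), Function.update x d t 2 ≠ 0 := by
    by_cases hd : (2 : Fin 4) = d
    · subst hd
      simp only [Function.update_self]
      exact eventually_ne_nhds hx
    · refine Filter.Eventually.of_forall fun t => ?_
      rw [Function.update_of_ne hd]
      exact hx
  filter_upwards [hev] with t ht
  exact christoffel_eq hβ hH ht l j k

lemma curv_eq_gam (hβ : β ≠ 0) (hH : ContDiff ℝ (⊤ : ℕ∞) (FF H)) (hx : x 2 ≠ 0) (i j k l : Fin 4) :
    curv (siklos β H) x i j k l =
      pd i (fun y => Gam β H l j k y) x - pd j (fun y => Gam β H l i k y) x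
      + ∑ m, (Gam β H l i m x * Gam β H m j k x - Gam β H l j m x * Gam β H m i k x) := by
  rw [curv, pd_christoffel hβ hH hx, pd_christoffel hβ hH hx]
  congr 1
  refine Finset.sum_congr rfl fun m _ => ?_
  rw [christoffel_eq hβ hH hx, christoffel_eq hβ hH hx, christoffel_eq hβ hH hx,
    christoffel_eq hβ hH hx]

set_option maxHeartbeats 1600000 in
lemma curv1220 (hβ : β ≠ 0) (hH : ContDiff ℝ (⊤ : ℕ∞) (FF H)) (hx : x 2 ≠ 0) :
    curv (siklos β H) x 1 2 2 0
      = H3 H (x 1) (x 2) (x 3) / (2 * x 2) - H33 H (x 1) (x 2) (x 3) / 2 := by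
  rw [curv_eq_gam hβ hH hx]
  simp [Gam, Fin.sum_univ_four, pdZ, pdN0, pdN1, pdN2, pdN3, pdP0, pdP1, pdP2, pdP3,
    pdF2_0, pdF2_1, pdF2_2 hH, pdF2_3 hH, pdF3_0, pdF3_1, pdF3_2, pdF3_3 hH,
    pdF4_0, pdF4_1, pdF4_2, pdF4_3, pdNF4_0, pdNF4_1, pdNF4_2, pdNF4_3,
    pdM0, pdM1 hH, pdM2 hH hx, pdM3 hH]
  field_simp
  ring

set_option maxHeartbeats 1600000 in
lemma curv1330 (hβ : β ≠ 0) (hH : ContDiff ℝ (⊤ : ℕ∞) (FF H)) (hx : x 2 ≠ 0) :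
    curv (siklos β H) x 1 3 3 0
      = H3 H (x 1) (x 2) (x 3) / (2 * x 2) - H44 H (x 1) (x 2) (x 3) / 2 := by
  rw [curv_eq_gam hβ hH hx]
  simp [Gam, Fin.sum_univ_four, pdZ, pdN0, pdN1, pdN2, pdN3, pdP0, pdP1, pdP2, pdP3,
    pdF2_0, pdF2_1, pdF2_2 hH, pdF2_3 hH, pdF3_0, pdF3_1, pdF3_2, pdF3_3 hH,
    pdF4_0, pdF4_1, pdF4_2, pdF4_3, pdNF4_0, pdNF4_1, pdNF4_2, pdNF4_3,
    pdM0, pdM1 hH, pdM2 hH hx, pdM3 hH]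
  field_simp
  ring

set_option maxHeartbeats 1600000 in
lemma curv1230 (hβ : β ≠ 0) (hH : ContDiff ℝ (⊤ : ℕ∞) (FF H)) (hx : x 2 ≠ 0) :
    curv (siklos β H) x 1 2 3 0 = -(H34 H (x 1) (x 2) (x 3) / 2) := by
  rw [curv_eq_gam hβ hH hx]
  simp [Gam, Fin.sum_univ_four, pdZ, pdN0, pdN1, pdN2, pdN3, pdP0, pdP1, pdP2, pdP3,
    pdF2_0, pdF2_1, pdF2_2 hH, pdF2_3 hH, pdF3_0, pdF3_1, pdF3_2, pdF3_3 hH,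
    pdF4_0, pdF4_1, pdF4_2, pdF4_3, pdNF4_0, pdNF4_1, pdNF4_2, pdNF4_3,
    pdM0, pdM1 hH, pdM2 hH hx, pdM3 hH]
  ring

end CURV
end SA
set_option maxHeartbeats 3200000 in
/-- the Siklos metric has constant sectional curvature `−1/β²` iff
`(2/x₃)H'₃ − H''₃₃ − H''₄₄ = 0`, `H''₃₃ − H''₄₄ = 0` and `H''₃₄ = 0`. -/
theorem stmt_5 (β : ℝ) (hβ : 0 < β) (H : ℝ → ℝ → ℝ → ℝ)
    (hH : ContDiff ℝ (⊤ : ℕ∞) fun p : ℝ × ℝ × ℝ => H p.1 p.2.1 p.2.2) :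
    (∀ x : Fin 4 → ℝ, 0 < x 2 → ∀ i j k l : Fin 4,
        curv (siklos β H) x i j k l =
          -(1 / β ^ 2) * (siklos β H x j k * (if l = i then 1 else 0)
            - siklos β H x i k * (if l = j then 1 else 0))) ↔
    (∀ a b c : ℝ, 0 < b →
      2 / b * H3 H a b c - H33 H a b c - H44 H a b c = 0 ∧
      H33 H a b c - H44 H a b c = 0 ∧ H34 H a b c = 0) := by
  have hβ0 : β ≠ 0 := ne_of_gt hβ
  have hHF : ContDiff ℝ (⊤ : ℕ∞) (SA.FF H) := hH
  constructor
  · intro h a b c hb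
    have hb0 : b ≠ 0 := ne_of_gt hb
    set x : Fin 4 → ℝ := ![0, a, b, c] with hxdef
    have hx1 : x 1 = a := rfl
    have hx2 : x 2 = b := rfl
    have hx3 : x 3 = c := rfl
    have hpos : 0 < x 2 := hb
    have hx0 : x 2 ≠ 0 := hb0
    have h1 := h x hpos 1 2 2 0
    rw [SA.curv1220 hβ0 hHF hx0] at h1
    simp [siklos, hx1, hx2, hx3] at h1
    have h2 := h x hpos 1 3 3 0
    rw [SA.curv1330 hβ0 hHF hx0] at h2
    simp [siklos, hx1, hx2, hx3] at h2
    have h3 := h x hpos 1 2 3 0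
    rw [SA.curv1230 hβ0 hHF hx0] at h3
    simp [siklos, hx1, hx2, hx3] at h3
    refine ⟨?_, ?_, ?_⟩
    · field_simp at h1 h2 ⊢
      first
        | linear_combination h1 + h2
        | linear_combination -((h1 + h2) / 2)
    · field_simp at h1 h2 ⊢
      have hz : b * (H33 H a b c - H44 H a b c) = 0 := by linear_combination h2 - h1
      have := (mul_eq_zero.mp hz).resolve_left hb0
      linarith
    · linarith
  · intro h x hx i j k l
    have hx0 : x 2 ≠ 0 := ne_of_gt hx
    obtain ⟨e1, e2, e3⟩ := h (x 1) (x 2) (x 3) hx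
    have e1' : 2 * H3 H (x 1) (x 2) (x 3) - x 2 * H33 H (x 1) (x 2) (x 3)
        - x 2 * H44 H (x 1) (x 2) (x 3) = 0 := by
      have hne := ne_of_gt hx
      field_simp at e1
      linear_combination e1
    have hA : H33 H (x 1) (x 2) (x 3) = H3 H (x 1) (x 2) (x 3) / x 2 := by
      rw [eq_div_iff hx0]
      linear_combination (x 2 / 2) * e2 - e1' / 2
    have hB : H44 H (x 1) (x 2) (x 3) = H3 H (x 1) (x 2) (x 3) / x 2 := by
      rw [eq_div_iff hx0]
      linear_combination -(x 2 / 2) * e2 - e1' / 2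
    rw [SA.curv_eq_gam hβ0 hHF hx0]
    fin_cases i <;> fin_cases j <;> fin_cases k <;> fin_cases l <;>
      simp [SA.Gam, siklos, Fin.sum_univ_four, SA.pdZ, SA.pdN0, SA.pdN1, SA.pdN2, SA.pdN3,
        SA.pdP0, SA.pdP1, SA.pdP2, SA.pdP3,
        SA.pdF2_0, SA.pdF2_1, SA.pdF2_2 hHF, SA.pdF2_3 hHF,
        SA.pdF3_0, SA.pdF3_1, SA.pdF3_2, SA.pdF3_3 hHF,
        SA.pdF4_0, SA.pdF4_1, SA.pdF4_2, SA.pdF4_3,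
        SA.pdNF4_0, SA.pdNF4_1, SA.pdNF4_2, SA.pdNF4_3,
        SA.pdM0, SA.pdM1 hHF, SA.pdM2 hHF hx0, SA.pdM3 hHF, hA, hB, e3] <;>
      (try field_simp) <;>
      ring
end

section
/- For every smooth defining function H, the scalar curvature of the Siklos metric is constant: scal(x) = −12/β² at every x with x₃ > 0. -/
open scoped BigOperators

/-! ### Auxiliary development for `stmt_6` -/

section Siklos

variable (β : ℝ) (H : ℝ → ℝ → ℝ → ℝ)

/-- Explicit inverse of the Siklos metric. -/
noncomputable def sikInv (x : Fin 4 → ℝ) : Matrix (Fin 4) (Fin 4) ℝ :=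
  Matrix.of fun i j =>
    if (i = 0 ∧ j = 1) ∨ (i = 1 ∧ j = 0) ∨ (i = 2 ∧ j = 2) ∨ (i = 3 ∧ j = 3) then
      x 2 ^ 2 / β ^ 2
    else if i = 0 ∧ j = 0 then -(x 2 ^ 2 / β ^ 2) * H (x 1) (x 2) (x 3)
    else 0

lemma siklos_inv_s6 (hβ : β ≠ 0) (x : Fin 4 → ℝ) (hx : x 2 ≠ 0) :
    (siklos β H x)⁻¹ = sikInv β H x := by
  apply Matrix.inv_eq_right_inv
  ext i j
  fin_cases i <;> fin_cases j <;>
    (simp [siklos, sikInv, Matrix.mul_apply, Fin.sum_univ_four]; try field_simp) <;> try ring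

/-- Differentiability of `H` in the second slot. -/
lemma diffH3 (hH : ContDiff ℝ (⊤ : ℕ∞) fun p : ℝ × ℝ × ℝ => H p.1 p.2.1 p.2.2)
    (a b c : ℝ) : DifferentiableAt ℝ (fun t => H a t c) b := by
  have h1 : DifferentiableAt ℝ (fun t : ℝ => ((a, t, c) : ℝ × ℝ × ℝ)) b := by fun_prop
  exact (hH.differentiable (by simp) (a, b, c)).comp b h1

lemma hasDerivAt_A (s : ℝ) (hs : s ≠ 0) :
    HasDerivAt (fun t : ℝ => β ^ 2 / t ^ 2) (-2 * β ^ 2 / s ^ 3) s := by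
  have h := ((hasDerivAt_pow 2 s).inv (pow_ne_zero 2 hs)).const_mul (β ^ 2)
  have heq : (fun t : ℝ => β ^ 2 / t ^ 2) = fun t : ℝ => β ^ 2 * (t ^ 2)⁻¹ := by
    funext t; rw [div_eq_mul_inv]
  rw [heq]
  refine h.congr_deriv ?_
  field_simp
  ring

lemma pd_zero_fn (i : Fin 4) (x : Fin 4 → ℝ) : pd i (fun _ : Fin 4 → ℝ => (0 : ℝ)) x = 0 := by
  simp [pd]

lemma pdE1_0 (x : Fin 4 → ℝ) : pd 0 (fun z : Fin 4 → ℝ => β ^ 2 / z 2 ^ 2) x = 0 := by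
  simp [pd, Function.update_apply]
lemma pdE1_1 (x : Fin 4 → ℝ) : pd 1 (fun z : Fin 4 → ℝ => β ^ 2 / z 2 ^ 2) x = 0 := by
  simp [pd, Function.update_apply]
lemma pdE1_3 (x : Fin 4 → ℝ) : pd 3 (fun z : Fin 4 → ℝ => β ^ 2 / z 2 ^ 2) x = 0 := by
  simp [pd, Function.update_apply]
lemma pdE1_2 (x : Fin 4 → ℝ) (hx : x 2 ≠ 0) :
    pd 2 (fun z : Fin 4 → ℝ => β ^ 2 / z 2 ^ 2) x = -2 * β ^ 2 / x 2 ^ 3 := by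
  have : (fun t : ℝ => β ^ 2 / (Function.update x 2 t 2) ^ 2) = fun t : ℝ => β ^ 2 / t ^ 2 := by
    funext t; rw [Function.update_self]
  rw [pd, this, (hasDerivAt_A β (x 2) hx).deriv]

lemma pdE2_0 (x : Fin 4 → ℝ) :
    pd 0 (fun z : Fin 4 → ℝ => β ^ 2 / z 2 ^ 2 * H (z 1) (z 2) (z 3)) x = 0 := by
  simp [pd, Function.update_apply]
lemma pdE2_1 (x : Fin 4 → ℝ) :
    pd 1 (fun z : Fin 4 → ℝ => β ^ 2 / z 2 ^ 2 * H (z 1) (z 2) (z 3)) x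
      = β ^ 2 / x 2 ^ 2 * H2 H (x 1) (x 2) (x 3) := by
  have : (fun t : ℝ => β ^ 2 / (Function.update x 1 t 2) ^ 2
        * H (Function.update x 1 t 1) (Function.update x 1 t 2) (Function.update x 1 t 3))
      = fun t : ℝ => β ^ 2 / x 2 ^ 2 * H t (x 2) (x 3) := by
    funext t; simp [Function.update_apply]
  rw [pd, this, deriv_const_mul_field]
  rfl
lemma pdE2_3 (x : Fin 4 → ℝ) :
    pd 3 (fun z : Fin 4 → ℝ => β ^ 2 / z 2 ^ 2 * H (z 1) (z 2) (z 3)) x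
      = β ^ 2 / x 2 ^ 2 * H4 H (x 1) (x 2) (x 3) := by
  have : (fun t : ℝ => β ^ 2 / (Function.update x 3 t 2) ^ 2
        * H (Function.update x 3 t 1) (Function.update x 3 t 2) (Function.update x 3 t 3))
      = fun t : ℝ => β ^ 2 / x 2 ^ 2 * H (x 1) (x 2) t := by
    funext t; simp [Function.update_apply]
  rw [pd, this, deriv_const_mul_field]
  rfl
lemma pdE2_2 (hH : ContDiff ℝ (⊤ : ℕ∞) fun p : ℝ × ℝ × ℝ => H p.1 p.2.1 p.2.2)
    (x : Fin 4 → ℝ) (hx : x 2 ≠ 0) :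
    pd 2 (fun z : Fin 4 → ℝ => β ^ 2 / z 2 ^ 2 * H (z 1) (z 2) (z 3)) x
      = -2 * β ^ 2 / x 2 ^ 3 * H (x 1) (x 2) (x 3)
        + β ^ 2 / x 2 ^ 2 * H3 H (x 1) (x 2) (x 3) := by
  have heq : (fun t : ℝ => β ^ 2 / (Function.update x 2 t 2) ^ 2
        * H (Function.update x 2 t 1) (Function.update x 2 t 2) (Function.update x 2 t 3))
      = fun t : ℝ => β ^ 2 / t ^ 2 * H (x 1) t (x 3) := by
    funext t; simp [Function.update_apply]
  have h2 : HasDerivAt (fun t : ℝ => H (x 1) t (x 3)) (H3 H (x 1) (x 2) (x 3)) (x 2) :=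
    (diffH3 H hH (x 1) (x 2) (x 3)).hasDerivAt
  rw [pd, heq, ((hasDerivAt_A β (x 2) hx).fun_mul h2).deriv]

end Siklos
section Entries
variable (β : ℝ) (H : ℝ → ℝ → ℝ → ℝ)

lemma sik00 (z : Fin 4 → ℝ) : siklos β H z 0 0 = 0 := by simp [siklos]
lemma sik01 (z : Fin 4 → ℝ) : siklos β H z 0 1 = β ^ 2 / z 2 ^ 2 := by simp [siklos]
lemma sik02 (z : Fin 4 → ℝ) : siklos β H z 0 2 = 0 := by simp [siklos]
lemma sik03 (z : Fin 4 → ℝ) : siklos β H z 0 3 = 0 := by simp [siklos]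
lemma sik10 (z : Fin 4 → ℝ) : siklos β H z 1 0 = β ^ 2 / z 2 ^ 2 := by simp [siklos]
lemma sik11 (z : Fin 4 → ℝ) : siklos β H z 1 1 = β ^ 2 / z 2 ^ 2 * H (z 1) (z 2) (z 3) := by simp [siklos]
lemma sik12 (z : Fin 4 → ℝ) : siklos β H z 1 2 = 0 := by simp [siklos]
lemma sik13 (z : Fin 4 → ℝ) : siklos β H z 1 3 = 0 := by simp [siklos]
lemma sik20 (z : Fin 4 → ℝ) : siklos β H z 2 0 = 0 := by simp [siklos]
lemma sik21 (z : Fin 4 → ℝ) : siklos β H z 2 1 = 0 := by simp [siklos]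
lemma sik22 (z : Fin 4 → ℝ) : siklos β H z 2 2 = β ^ 2 / z 2 ^ 2 := by simp [siklos]
lemma sik23 (z : Fin 4 → ℝ) : siklos β H z 2 3 = 0 := by simp [siklos]
lemma sik30 (z : Fin 4 → ℝ) : siklos β H z 3 0 = 0 := by simp [siklos]
lemma sik31 (z : Fin 4 → ℝ) : siklos β H z 3 1 = 0 := by simp [siklos]
lemma sik32 (z : Fin 4 → ℝ) : siklos β H z 3 2 = 0 := by simp [siklos]
lemma sik33 (z : Fin 4 → ℝ) : siklos β H z 3 3 = β ^ 2 / z 2 ^ 2 := by simp [siklos]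
lemma iv00 (z : Fin 4 → ℝ) : sikInv β H z 0 0 = -(z 2 ^ 2 / β ^ 2) * H (z 1) (z 2) (z 3) := by simp [sikInv]
lemma iv01 (z : Fin 4 → ℝ) : sikInv β H z 0 1 = z 2 ^ 2 / β ^ 2 := by simp [sikInv]
lemma iv02 (z : Fin 4 → ℝ) : sikInv β H z 0 2 = 0 := by simp [sikInv]
lemma iv03 (z : Fin 4 → ℝ) : sikInv β H z 0 3 = 0 := by simp [sikInv]
lemma iv10 (z : Fin 4 → ℝ) : sikInv β H z 1 0 = z 2 ^ 2 / β ^ 2 := by simp [sikInv]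
lemma iv11 (z : Fin 4 → ℝ) : sikInv β H z 1 1 = 0 := by simp [sikInv]
lemma iv12 (z : Fin 4 → ℝ) : sikInv β H z 1 2 = 0 := by simp [sikInv]
lemma iv13 (z : Fin 4 → ℝ) : sikInv β H z 1 3 = 0 := by simp [sikInv]
lemma iv20 (z : Fin 4 → ℝ) : sikInv β H z 2 0 = 0 := by simp [sikInv]
lemma iv21 (z : Fin 4 → ℝ) : sikInv β H z 2 1 = 0 := by simp [sikInv]
lemma iv22 (z : Fin 4 → ℝ) : sikInv β H z 2 2 = z 2 ^ 2 / β ^ 2 := by simp [sikInv]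
lemma iv23 (z : Fin 4 → ℝ) : sikInv β H z 2 3 = 0 := by simp [sikInv]
lemma iv30 (z : Fin 4 → ℝ) : sikInv β H z 3 0 = 0 := by simp [sikInv]
lemma iv31 (z : Fin 4 → ℝ) : sikInv β H z 3 1 = 0 := by simp [sikInv]
lemma iv32 (z : Fin 4 → ℝ) : sikInv β H z 3 2 = 0 := by simp [sikInv]
lemma iv33 (z : Fin 4 → ℝ) : sikInv β H z 3 3 = z 2 ^ 2 / β ^ 2 := by simp [sikInv]

end Entries
section Gamma

variable (β : ℝ) (H : ℝ → ℝ → ℝ → ℝ)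

/-- Explicit table of Christoffel symbols of the Siklos metric: `Gam H y k i j = Γᵏᵢⱼ(y)`. -/
noncomputable def Gam (y : Fin 4 → ℝ) (k i j : Fin 4) : ℝ :=
  if (k = 0 ∧ i = 0 ∧ j = 2) ∨ (k = 0 ∧ i = 2 ∧ j = 0) ∨ (k = 1 ∧ i = 1 ∧ j = 2)
      ∨ (k = 1 ∧ i = 2 ∧ j = 1) ∨ (k = 2 ∧ i = 2 ∧ j = 2)
      ∨ (k = 3 ∧ i = 2 ∧ j = 3) ∨ (k = 3 ∧ i = 3 ∧ j = 2) then -(1 / y 2)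
  else if (k = 2 ∧ i = 0 ∧ j = 1) ∨ (k = 2 ∧ i = 1 ∧ j = 0) ∨ (k = 2 ∧ i = 3 ∧ j = 3) then 1 / y 2
  else if k = 0 ∧ i = 1 ∧ j = 1 then H2 H (y 1) (y 2) (y 3) / 2
  else if (k = 0 ∧ i = 1 ∧ j = 2) ∨ (k = 0 ∧ i = 2 ∧ j = 1) then H3 H (y 1) (y 2) (y 3) / 2
  else if (k = 0 ∧ i = 1 ∧ j = 3) ∨ (k = 0 ∧ i = 3 ∧ j = 1) then H4 H (y 1) (y 2) (y 3) / 2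
  else if k = 2 ∧ i = 1 ∧ j = 1 then
    H (y 1) (y 2) (y 3) / y 2 - H3 H (y 1) (y 2) (y 3) / 2
  else if k = 3 ∧ i = 1 ∧ j = 1 then -(H4 H (y 1) (y 2) (y 3)) / 2
  else 0

lemma fm0 : (⟨0, by norm_num⟩ : Fin 4) = 0 := rfl
lemma fm1 : (⟨1, by norm_num⟩ : Fin 4) = 1 := rfl
lemma fm2 : (⟨2, by norm_num⟩ : Fin 4) = 2 := rfl
lemma fm3 : (⟨3, by norm_num⟩ : Fin 4) = 3 := rfl

set_option maxHeartbeats 1000000 in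
lemma christoffel_eq (hβ : β ≠ 0) (hH : ContDiff ℝ (⊤ : ℕ∞) fun p : ℝ × ℝ × ℝ => H p.1 p.2.1 p.2.2)
    (y : Fin 4 → ℝ) (hy : y 2 ≠ 0) (k i j : Fin 4) :
    christoffel (siklos β H) y k i j = Gam H y k i j := by
  have hinv := siklos_inv_s6 β H hβ y hy
  fin_cases k <;> fin_cases i <;> fin_cases j <;>
  · simp only [fm0, fm1, fm2, fm3]
    simp only [christoffel, Fin.sum_univ_four, hinv,
      sik00 β H, sik01 β H, sik02 β H, sik03 β H, sik10 β H, sik11 β H, sik12 β H, sik13 β H,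
      sik20 β H, sik21 β H, sik22 β H, sik23 β H, sik30 β H, sik31 β H, sik32 β H, sik33 β H,
      iv00 β H, iv01 β H, iv02 β H, iv03 β H, iv10 β H, iv11 β H, iv12 β H, iv13 β H,
      iv20 β H, iv21 β H, iv22 β H, iv23 β H, iv30 β H, iv31 β H, iv32 β H, iv33 β H,
      pd_zero_fn, pdE1_0 β, pdE1_1 β, pdE1_3 β, pdE1_2 β y hy,
      pdE2_0 β H, pdE2_1 β H, pdE2_3 β H, pdE2_2 β H hH y hy]
    simp [Gam]
    try field_simp
    try ring

end Gamma
section Ricci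

variable (β : ℝ) (H : ℝ → ℝ → ℝ → ℝ)

lemma pd_congr {f : (Fin 4 → ℝ) → ℝ} {c : ℝ → ℝ}
    (hf : ∀ y : Fin 4 → ℝ, y 2 ≠ 0 → f y = c (y 2)) (x : Fin 4 → ℝ) (hx : x 2 ≠ 0)
    (i : Fin 4) :
    pd i f x = if i = 2 then deriv c (x 2) else 0 := by
  by_cases h : i = (2 : Fin 4)
  · subst h
    rw [if_pos rfl, pd]
    have hev : (fun t => f (Function.update x 2 t)) =ᶠ[nhds (x 2)] c := by
      filter_upwards [eventually_ne_nhds hx] with t ht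
      rw [hf (Function.update x 2 t) (by simpa using ht), Function.update_self]
    exact hev.deriv_eq
  · rw [if_neg h, pd]
    have hfun : (fun t => f (Function.update x i t)) = fun _ => c (x 2) := by
      funext t
      rw [hf _ (by rw [Function.update_of_ne (Ne.symm h)]; exact hx),
        Function.update_of_ne (Ne.symm h)]
    rw [hfun, deriv_const]

end Ricci
section RicciComp

variable (β : ℝ) (H : ℝ → ℝ → ℝ → ℝ)

lemma pdC_zero (hβ : β ≠ 0) (hH : ContDiff ℝ (⊤ : ℕ∞) fun p : ℝ × ℝ × ℝ => H p.1 p.2.1 p.2.2)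
    (x : Fin 4 → ℝ) (hx : x 2 ≠ 0) (l j k : Fin 4)
    (h0 : ∀ y : Fin 4 → ℝ, Gam H y l j k = 0) (i : Fin 4) :
    pd i (fun y => christoffel (siklos β H) y l j k) x = 0 := by
  rw [pd_congr (c := fun _ => 0)
    (fun y hy => by rw [christoffel_eq β H hβ hH y hy, h0]) x hx i]
  simp

lemma pdC_u (hβ : β ≠ 0) (hH : ContDiff ℝ (⊤ : ℕ∞) fun p : ℝ × ℝ × ℝ => H p.1 p.2.1 p.2.2)
    (x : Fin 4 → ℝ) (hx : x 2 ≠ 0) (l j k : Fin 4)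
    (h0 : ∀ y : Fin 4 → ℝ, Gam H y l j k = (y 2)⁻¹) (i : Fin 4) :
    pd i (fun y => christoffel (siklos β H) y l j k) x
      = if i = 2 then -(x 2 ^ 2)⁻¹ else 0 := by
  rw [pd_congr (c := fun t => t⁻¹)
    (fun y hy => by rw [christoffel_eq β H hβ hH y hy, h0]) x hx i, deriv_inv]

lemma pdC_nu (hβ : β ≠ 0) (hH : ContDiff ℝ (⊤ : ℕ∞) fun p : ℝ × ℝ × ℝ => H p.1 p.2.1 p.2.2)
    (x : Fin 4 → ℝ) (hx : x 2 ≠ 0) (l j k : Fin 4)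
    (h0 : ∀ y : Fin 4 → ℝ, Gam H y l j k = -(y 2)⁻¹) (i : Fin 4) :
    pd i (fun y => christoffel (siklos β H) y l j k) x
      = if i = 2 then (x 2 ^ 2)⁻¹ else 0 := by
  rw [pd_congr (c := fun t => -t⁻¹)
    (fun y hy => by rw [christoffel_eq β H hβ hH y hy, h0]) x hx i, deriv.fun_neg, deriv_inv]
  simp

end RicciComp
section RicciVals

variable (β : ℝ) (H : ℝ → ℝ → ℝ → ℝ)

set_option maxHeartbeats 1000000 in
lemma ricci00 (hβ : β ≠ 0) (hH : ContDiff ℝ (⊤ : ℕ∞) fun p : ℝ × ℝ × ℝ => H p.1 p.2.1 p.2.2)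
    (x : Fin 4 → ℝ) (hx : x 2 ≠ 0) : ricci β H x 0 0 = 0 := by
  have hC := christoffel_eq β H hβ hH x hx
  have hz := pdC_zero β H hβ hH x hx
  have hu := pdC_u β H hβ hH x hx
  have hnu := pdC_nu β H hβ hH x hx
  simp only [ricci, curv, Fin.sum_univ_four]
  simp only [hz 0 0 0 (fun y => by simp [Gam]), hz 1 0 0 (fun y => by simp [Gam]), hz 2 0 0 (fun y => by simp [Gam]), hz 3 0 0 (fun y => by simp [Gam]), hz 1 1 0 (fun y => by simp [Gam]), hz 2 2 0 (fun y => by simp [Gam]), hz 3 3 0 (fun y => by simp [Gam])]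
  simp only [hC]
  simp [Gam]
  try field_simp
  try ring

set_option maxHeartbeats 1000000 in
lemma ricci01 (hβ : β ≠ 0) (hH : ContDiff ℝ (⊤ : ℕ∞) fun p : ℝ × ℝ × ℝ => H p.1 p.2.1 p.2.2)
    (x : Fin 4 → ℝ) (hx : x 2 ≠ 0) : ricci β H x 0 1 = -3 / x 2 ^ 2 := by
  have hC := christoffel_eq β H hβ hH x hx
  have hz := pdC_zero β H hβ hH x hx
  have hu := pdC_u β H hβ hH x hx
  have hnu := pdC_nu β H hβ hH x hx
  simp only [ricci, curv, Fin.sum_univ_four]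
  simp only [hz 0 0 1 (fun y => by simp [Gam]), hz 1 0 1 (fun y => by simp [Gam]), hu 2 0 1 (fun y => by simp [Gam]), hz 3 0 1 (fun y => by simp [Gam]), hz 1 1 1 (fun y => by simp [Gam]), hz 2 2 1 (fun y => by simp [Gam]), hz 3 3 1 (fun y => by simp [Gam])]
  simp only [hC]
  simp [Gam]
  try field_simp
  try ring

set_option maxHeartbeats 1000000 in
lemma ricci10 (hβ : β ≠ 0) (hH : ContDiff ℝ (⊤ : ℕ∞) fun p : ℝ × ℝ × ℝ => H p.1 p.2.1 p.2.2)
    (x : Fin 4 → ℝ) (hx : x 2 ≠ 0) : ricci β H x 1 0 = -3 / x 2 ^ 2 := by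
  have hC := christoffel_eq β H hβ hH x hx
  have hz := pdC_zero β H hβ hH x hx
  have hu := pdC_u β H hβ hH x hx
  have hnu := pdC_nu β H hβ hH x hx
  simp only [ricci, curv, Fin.sum_univ_four]
  simp only [hz 0 1 0 (fun y => by simp [Gam]), hz 1 1 0 (fun y => by simp [Gam]), hu 2 1 0 (fun y => by simp [Gam]), hz 3 1 0 (fun y => by simp [Gam]), hz 0 0 0 (fun y => by simp [Gam]), hz 2 2 0 (fun y => by simp [Gam]), hz 3 3 0 (fun y => by simp [Gam])]
  simp only [hC]
  simp [Gam]
  try field_simp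
  try ring

set_option maxHeartbeats 1000000 in
lemma ricci22 (hβ : β ≠ 0) (hH : ContDiff ℝ (⊤ : ℕ∞) fun p : ℝ × ℝ × ℝ => H p.1 p.2.1 p.2.2)
    (x : Fin 4 → ℝ) (hx : x 2 ≠ 0) : ricci β H x 2 2 = -3 / x 2 ^ 2 := by
  have hC := christoffel_eq β H hβ hH x hx
  have hz := pdC_zero β H hβ hH x hx
  have hu := pdC_u β H hβ hH x hx
  have hnu := pdC_nu β H hβ hH x hx
  simp only [ricci, curv, Fin.sum_univ_four]
  simp only [hz 0 2 2 (fun y => by simp [Gam]), hz 1 2 2 (fun y => by simp [Gam]), hnu 2 2 2 (fun y => by simp [Gam]), hz 3 2 2 (fun y => by simp [Gam]), hnu 0 0 2 (fun y => by simp [Gam]), hnu 1 1 2 (fun y => by simp [Gam]), hnu 3 3 2 (fun y => by simp [Gam])]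
  simp only [hC]
  simp [Gam]
  try field_simp
  try ring

set_option maxHeartbeats 1000000 in
lemma ricci33 (hβ : β ≠ 0) (hH : ContDiff ℝ (⊤ : ℕ∞) fun p : ℝ × ℝ × ℝ => H p.1 p.2.1 p.2.2)
    (x : Fin 4 → ℝ) (hx : x 2 ≠ 0) : ricci β H x 3 3 = -3 / x 2 ^ 2 := by
  have hC := christoffel_eq β H hβ hH x hx
  have hz := pdC_zero β H hβ hH x hx
  have hu := pdC_u β H hβ hH x hx
  have hnu := pdC_nu β H hβ hH x hx
  simp only [ricci, curv, Fin.sum_univ_four]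
  simp only [hz 0 3 3 (fun y => by simp [Gam]), hz 1 3 3 (fun y => by simp [Gam]), hu 2 3 3 (fun y => by simp [Gam]), hz 3 3 3 (fun y => by simp [Gam]), hz 0 0 3 (fun y => by simp [Gam]), hz 1 1 3 (fun y => by simp [Gam]), hz 2 2 3 (fun y => by simp [Gam])]
  simp only [hC]
  simp [Gam]
  try field_simp
  try ring

end RicciVals
/-- the scalar curvature of any Siklos metric is the constant `−12/β²`. -/
theorem stmt_6 (β : ℝ) (hβ : 0 < β) (H : ℝ → ℝ → ℝ → ℝ)
    (hH : ContDiff ℝ (⊤ : ℕ∞) fun p : ℝ × ℝ × ℝ => H p.1 p.2.1 p.2.2) :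
    ∀ x : Fin 4 → ℝ, 0 < x 2 → scal β H x = -12 / β ^ 2 := by
  intro x hx2
  have hx : x 2 ≠ 0 := ne_of_gt hx2
  have hb : β ≠ 0 := ne_of_gt hβ
  simp only [scal, Fin.sum_univ_four, siklos_inv_s6 β H hb x hx,
    iv00 β H, iv01 β H, iv02 β H, iv03 β H, iv10 β H, iv11 β H, iv12 β H, iv13 β H,
    iv20 β H, iv21 β H, iv22 β H, iv23 β H, iv30 β H, iv31 β H, iv32 β H, iv33 β H,
    ricci00 β H hb hH x hx, ricci01 β H hb hH x hx, ricci10 β H hb hH x hx,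
    ricci22 β H hb hH x hx, ricci33 β H hb hH x hx]
  field_simp
  ring
end

section
/- For every smooth defining function H, the vector field X = ∂₁ is a Killing vector field of the Siklos metric on {x₃ > 0}. If moreover H'₄ ≡ 0 (i.e. H does not depend on x₄), then the vector fields ∂₄ and x₄∂₁ − x₂∂₄ are also Killing vector fields of the Siklos metric. -/
open scoped BigOperators

/-- `X` is a Killing vector field of the Siklos metric on `{x₃ > 0}`. -/
def IsKillingOn (β : ℝ) (H : ℝ → ℝ → ℝ → ℝ) (X : (Fin 4 → ℝ) → Fin 4 → ℝ) : Prop :=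
  ∀ x : Fin 4 → ℝ, 0 < x 2 → ∀ i j : Fin 4,
    (∑ k, (X x k * pd k (fun y => siklos β H y i j) x
      + siklos β H x k j * pd i (fun y => X y k) x
      + siklos β H x i k * pd j (fun y => X y k) x)) = 0


lemma aux_upd0 (x : Fin 4 → ℝ) (t : ℝ) (β : ℝ) (H : ℝ → ℝ → ℝ → ℝ) :
    siklos β H (Function.update x 0 t) = siklos β H x := by
  funext i j
  simp [siklos, Function.update_of_ne]

lemma aux_pd0 (β : ℝ) (H : ℝ → ℝ → ℝ → ℝ) (i j : Fin 4) (x : Fin 4 → ℝ) :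
    pd 0 (fun y => siklos β H y i j) x = 0 := by
  unfold pd
  simp [aux_upd0]

lemma aux_pd3 (β : ℝ) (H : ℝ → ℝ → ℝ → ℝ) (h4 : ∀ a b c : ℝ, H4 H a b c = 0)
    (i j : Fin 4) (x : Fin 4 → ℝ) :
    pd 3 (fun y => siklos β H y i j) x = 0 := by
  unfold pd siklos
  simp only [Matrix.of_apply, Function.update_of_ne (show (1:Fin 4) ≠ 3 by decide),
    Function.update_of_ne (show (2:Fin 4) ≠ 3 by decide), Function.update_self]
  by_cases h1 : (i = 0 ∧ j = 1) ∨ (i = 1 ∧ j = 0) ∨ (i = 2 ∧ j = 2) ∨ (i = 3 ∧ j = 3)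
  · simp [h1]
  · by_cases h2 : i = 1 ∧ j = 1
    · obtain ⟨rfl, rfl⟩ := h2
      norm_num
      rw [show (fun t => if (1:Fin 4) = 2 ∨ (1:Fin 4) = 3 then β ^ 2 / x 2 ^ 2
            else β ^ 2 / x 2 ^ 2 * H (x 1) (x 2) t) =
          fun t => β ^ 2 / x 2 ^ 2 * H (x 1) (x 2) t from by
        funext t; rw [if_neg (by decide)]]
      rw [deriv_const_mul_field]
      rw [show deriv (fun t => H (x 1) (x 2) t) (x 3) = H4 H (x 1) (x 2) (x 3) from rfl, h4]
      ring
    · simp [h1, h2]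

lemma aux_pd_const {n : ℕ} (i : Fin n) (c : ℝ) (x : Fin n → ℝ) : pd i (fun _ => c) x = 0 := by
  simp [pd]

lemma aux_pd_coord (i j : Fin 4) (x : Fin 4 → ℝ) :
    pd i (fun y => y j) x = if j = i then 1 else 0 := by
  unfold pd
  rcases eq_or_ne j i with h | h
  · subst h; simp
  · simp [Function.update_of_ne h, h]

lemma aux_pd_neg_coord (i j : Fin 4) (x : Fin 4 → ℝ) :
    pd i (fun y => -y j) x = if j = i then -1 else 0 := by
  unfold pd
  rcases eq_or_ne j i with h | h
  · subst h; simp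
  · simp [Function.update_of_ne h, h]

/-- `∂₁` is always Killing; if `H'₄ ≡ 0` then `∂₄` and `x₄∂₁ − x₂∂₄`
are also Killing vector fields of the Siklos metric. -/
theorem stmt_7 (β : ℝ) (hβ : 0 < β) (H : ℝ → ℝ → ℝ → ℝ)
    (hH : ContDiff ℝ (⊤ : ℕ∞) fun p : ℝ × ℝ × ℝ => H p.1 p.2.1 p.2.2) :
    IsKillingOn β H (fun _ => ![1, 0, 0, 0]) ∧
    ((∀ a b c : ℝ, H4 H a b c = 0) →
      IsKillingOn β H (fun _ => ![0, 0, 0, 1]) ∧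
      IsKillingOn β H (fun x => ![x 3, 0, 0, -x 1])) := by
  refine ⟨?_, fun h4 => ⟨?_, ?_⟩⟩
  · intro x hx i j
    simp [Fin.sum_univ_four, aux_pd_const, aux_pd0]
  · intro x hx i j
    simp [Fin.sum_univ_four, aux_pd_const, aux_pd3 β H h4]
  · intro x hx i j
    simp only [Fin.sum_univ_four, Matrix.cons_val_zero, Matrix.cons_val_one, Matrix.head_cons,
      Matrix.cons_val_two, Matrix.tail_cons, Matrix.cons_val_three, aux_pd_const, aux_pd_coord,
      aux_pd_neg_coord, aux_pd0, aux_pd3 β H h4]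
    fin_cases i <;> fin_cases j <;> simp [siklos]
end
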